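/- arXiv:2311.07009 — 10 statements merged into one kernel-verified Lean document; each statement's English description precedes it below -/
import Mathlib

section
/- For every n ≥ 4 and every δ > 0, there exists a source of size n (positive probabilities summing to 1) and two prefix codes C and H for the source, where H is a Huffman code (expected-length optimal), such that the competitive advantage of C over H exceeds 1/3 − δ. -/
/-!
Take the source `(1/3 + ε, 1/3, 1/3 - 9ε/8, ε 2^{-|h₃|}, …)`, whose tail is dyadic in the lengths
of the Huffman code `h = (0, 10, 110, 111·u)` with `u` a complete prefix code (the unary code), so
the tail has mass `ε/8`.
The rival code rotates the first three codewords to `(110, 0, 10)`: it wins on two symbols of mass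
about `1/3` each and loses on one, an advantage of `1/3 - 17ε/8`.

Optimality of `h` is weak Lagrangian duality for the Kraft constraint `∑ 2^{-mᵢ} ≤ 1` with
multiplier `ε`: on each tail symbol `pᵢ m + ε 2^{-m}` is minimal at `m = |hᵢ|`, and on the first
three symbols `(1, 2, 3)` minimises the same quantity jointly among lengths whose Kraft sum is
below `1`, which it is once the tail is present.
-/

open Finset

section

variable {α ι : Type*}

def IsPrefixCode (c : ι → List α) : Prop :=
  ∀ i j, i ≠ j → ¬ c i <+: c j

theorem uniquelyDecodable_of_prefix_imp_eq {S : Set (List α)} (hnil : [] ∉ S)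
    (hS : ∀ u ∈ S, ∀ v ∈ S, u <+: v → u = v) : InformationTheory.UniquelyDecodable S := by
  intro L₁
  induction L₁ with
  | nil =>
    rintro (_ | ⟨v, L₂⟩) - h₂ hflat
    · rfl
    · have hv : v = [] := by simp_all
      exact absurd (hv ▸ h₂ v (by simp)) hnil
  | cons w L₁ ih =>
    rintro (_ | ⟨v, L₂⟩) h₁ h₂ hflat
    · have hw : w = [] := by simp_all
      exact absurd (hw ▸ h₁ w (by simp)) hnil
    · simp only [List.mem_cons, forall_eq_or_imp, List.flatten_cons] at h₁ h₂ hflat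
      have hwv : w = v :=
        (List.prefix_or_prefix_of_prefix (List.prefix_append w _)
          (hflat ▸ List.prefix_append v _)).elim (hS w h₁.1 v h₂.1)
          fun h ↦ (hS v h₂.1 w h₁.1 h).symm
      subst hwv
      rw [ih L₂ h₁.2 h₂.2 (List.append_cancel_left hflat)]

namespace IsPrefixCode

variable {c : ι → List α}

theorem injective (hc : IsPrefixCode c) : Function.Injective c :=
  fun i j h ↦ by_contra fun hij ↦ hc i j hij (h ▸ List.prefix_rfl)

theorem ne_nil [Nontrivial ι] (hc : IsPrefixCode c) (i : ι) : c i ≠ [] := by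
  intro h
  obtain ⟨j, hj⟩ := exists_ne i
  exact hc i j hj.symm (h ▸ List.nil_prefix)

theorem sum_pow_length_le_one [Fintype α] [Nonempty α] [Fintype ι] [Nontrivial ι]
    (hc : IsPrefixCode c) : ∑ i, (1 / Fintype.card α : ℝ) ^ (c i).length ≤ 1 := by
  classical
  rw [← Finset.sum_image (f := fun w : List α ↦ (1 / Fintype.card α : ℝ) ^ w.length)
    hc.injective.injOn]
  refine InformationTheory.kraft_mcmillan_inequality (uniquelyDecodable_of_prefix_imp_eq ?_ ?_)
  · simpa using hc.ne_nil
  · simp only [coe_image, coe_univ, Set.image_univ, Set.forall_mem_range]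
    intro i j h
    by_contra hne
    exact hc i j (fun hij ↦ hne (congrArg c hij)) h

end IsPrefixCode

theorem IsPrefixCode.prepend {c : ι → List α} (hc : IsPrefixCode c) (s : List α) :
    IsPrefixCode fun i ↦ s ++ c i :=
  fun i j hij ↦ (List.prefix_append_right_inj s).not.mpr (hc i j hij)

theorem not_prefix_append_of_incomparable {w s : List α} (x : List α) (hws : ¬ w <+: s)
    (hsw : ¬ s <+: w) : ¬ w <+: s ++ x ∧ ¬ s ++ x <+: w :=
  ⟨fun h ↦ (List.prefix_or_prefix_of_prefix h (List.prefix_append s x)).elim hws hsw,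
    fun h ↦ hsw ((List.prefix_append s x).trans h)⟩

theorem isPrefixCode_append {m n : ℕ} {a : Fin m → List α} {b : Fin n → List α}
    (ha : IsPrefixCode a) (hb : IsPrefixCode b)
    (hab : ∀ i j, ¬ a i <+: b j ∧ ¬ b j <+: a i) : IsPrefixCode (Fin.append a b) := by
  intro i j hij
  induction i using Fin.addCases <;> induction j using Fin.addCases <;>
    simp only [Fin.append_left, Fin.append_right] at hij ⊢
  · exact ha _ _ fun h ↦ hij (h ▸ rfl)
  · exact (hab _ _).1
  · exact (hab _ _).2
  · exact hb _ _ fun h ↦ hij (h ▸ rfl)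

end

def unaryCode : (k : ℕ) → Fin (k + 1) → List Bool
  | 0 => fun _ ↦ []
  | k + 1 => Fin.cons [false] fun j ↦ true :: unaryCode k j

theorem isPrefixCode_unaryCode : ∀ k, IsPrefixCode (unaryCode k)
  | 0 => fun i j hij ↦ (hij (Fin.ext (by omega))).elim
  | k + 1 => by
    intro i j hij
    induction i using Fin.cases <;> induction j using Fin.cases <;>
      simp only [unaryCode, Fin.cons_zero, Fin.cons_succ, List.cons_prefix_cons] at hij ⊢
    · exact (hij rfl).elim
    · simp
    · simp
    · exact fun h ↦ isPrefixCode_unaryCode k _ _ (fun h' ↦ hij (congrArg Fin.succ h')) h.2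

theorem sum_half_pow_length_unaryCode : ∀ k, ∑ i, (1 / 2 : ℝ) ^ (unaryCode k i).length = 1
  | 0 => by simp [unaryCode]
  | k + 1 => by
    simp only [unaryCode, Fin.sum_univ_succ, Fin.cons_zero, Fin.cons_succ, List.length_cons,
      pow_succ, ← Finset.sum_mul, sum_half_pow_length_unaryCode k]
    norm_num

theorem half_pow_mul_succ_le (L m : ℕ) :
    (1 / 2 : ℝ) ^ L * (L + 1) ≤ (1 / 2) ^ L * m + (1 / 2) ^ m := by
  rcases le_or_gt m L with hmL | hLm
  · have hpow : (1 / 2 : ℝ) ^ m = (1 / 2) ^ L * 2 ^ (L - m) := by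
      rw [← pow_mul_pow_sub (1 / 2 : ℝ) hmL, mul_assoc, ← mul_pow]; norm_num
    have hbern : 1 + ((L - m : ℕ) : ℝ) ≤ 2 ^ (L - m) := by
      simpa [one_add_one_eq_two] using one_add_mul_le_pow (by norm_num : (-2 : ℝ) ≤ 1) (L - m)
    rw [Nat.cast_sub hmL] at hbern
    rw [hpow]
    nlinarith [pow_pos (one_half_pos (α := ℝ)) L]
  · have : (L : ℝ) + 1 ≤ m := by exact_mod_cast hLm
    nlinarith [pow_pos (one_half_pos (α := ℝ)) L, pow_pos (one_half_pos (α := ℝ)) m]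

-- A Kraft sum below `1` forces `a + b + c ≥ 6`, with equality only for the permutations of
-- `(1, 2, 3)` and for `(2, 2, 2)`; when `a + b + c ≥ 7` the smallest weight alone suffices.
theorem head_lagrangian_le {ε : ℝ} (hε0 : 0 ≤ ε) (hε : ε ≤ 1 / 20) {a b c : ℕ}
    (hkraft : (1 / 2 : ℝ) ^ a + (1 / 2) ^ b + (1 / 2) ^ c < 1) :
    (1 / 3 + ε) * 1 + 1 / 3 * 2 + (1 / 3 - 9 / 8 * ε) * 3 + ε * (1 / 2 + 1 / 4 + 1 / 8) ≤
      (1 / 3 + ε) * a + 1 / 3 * b + (1 / 3 - 9 / 8 * ε) * c +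
        ε * ((1 / 2) ^ a + (1 / 2) ^ b + (1 / 2) ^ c) := by
  have hpow (x : ℕ) : (0 : ℝ) < (1 / 2) ^ x := by positivity
  have hpos (x : ℕ) (hx : (1 / 2 : ℝ) ^ x < 1) : 0 < x :=
    Nat.pos_of_ne_zero (by rintro rfl; simp at hx)
  have ha := hpos a (by linarith [hpow b, hpow c])
  have hb := hpos b (by linarith [hpow a, hpow c])
  have hc := hpos c (by linarith [hpow a, hpow b])
  rcases le_or_gt (a + b + c) 6 with hsum | hsum
  · have : a ≤ 4 := by omega
    have : b ≤ 4 := by omega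
    have : c ≤ 4 := by omega
    interval_cases a <;> interval_cases b <;> interval_cases c <;>
      norm_num at hkraft <;> norm_num <;> linarith
  · have hsum' : (0 : ℝ) ≤ a + b + c - 7 := by
      rw [sub_nonneg]; exact_mod_cast hsum
    nlinarith [mul_nonneg hε0 (Nat.cast_nonneg (α := ℝ) a),
      mul_nonneg hε0 (Nat.cast_nonneg (α := ℝ) b),
      mul_nonneg (by linarith : (0 : ℝ) ≤ 1 / 3 - 9 / 8 * ε) hsum',
      mul_nonneg hε0 (add_pos (add_pos (hpow a) (hpow b)) (hpow c)).le]

section Construction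

variable {k : ℕ} (u : Fin k → List Bool)

noncomputable def source (ε : ℝ) : Fin (3 + k) → ℝ :=
  Fin.append ![1 / 3 + ε, 1 / 3, 1 / 3 - 9 / 8 * ε]
    fun j ↦ ε * (1 / 2) ^ ([true, true, true] ++ u j).length

def huffmanCode : Fin (3 + k) → List Bool :=
  Fin.append ![[false], [true, false], [true, true, false]] fun j ↦ [true, true, true] ++ u j

def rivalCode : Fin (3 + k) → List Bool :=
  Fin.append ![[true, true, false], [false], [true, false]] fun j ↦ [true, true, true] ++ u j

variable {u}

theorem isPrefixCode_huffmanCode (hu : IsPrefixCode u) : IsPrefixCode (huffmanCode u) :=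
  isPrefixCode_append (by unfold IsPrefixCode; decide) (hu.prepend _) fun i _ ↦
    not_prefix_append_of_incomparable _ (by fin_cases i <;> decide) (by fin_cases i <;> decide)

theorem isPrefixCode_rivalCode (hu : IsPrefixCode u) : IsPrefixCode (rivalCode u) :=
  isPrefixCode_append (by unfold IsPrefixCode; decide) (hu.prepend _) fun i _ ↦
    not_prefix_append_of_incomparable _ (by fin_cases i <;> decide) (by fin_cases i <;> decide)

theorem source_pos {ε : ℝ} (hε0 : 0 < ε) (hε : ε ≤ 1 / 20) (i : Fin (3 + k)) :
    0 < source u ε i := by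
  induction i using Fin.addCases with
  | left i => fin_cases i <;> simp [source] <;> linarith
  | right j => simp only [source, Fin.append_right]; positivity

theorem sum_tail_source (hu : ∑ j, (1 / 2 : ℝ) ^ (u j).length = 1) (ε : ℝ) :
    ∑ j, ε * (1 / 2 : ℝ) ^ ([true, true, true] ++ u j).length = ε / 8 := by
  simp only [List.length_append, pow_add, ← mul_sum, hu]; norm_num; ring

theorem sum_source (hu : ∑ j, (1 / 2 : ℝ) ^ (u j).length = 1) (ε : ℝ) :
    ∑ i, source u ε i = 1 := by
  rw [Fin.sum_univ_add]
  simp only [source, Fin.append_left, Fin.append_right, sum_tail_source hu, Fin.sum_univ_three,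
    Matrix.cons_val]
  ring

theorem sum_source_mul_length_huffmanCode_le {ε : ℝ} (hε0 : 0 ≤ ε) (hε : ε ≤ 1 / 20)
    (hu : ∑ j, (1 / 2 : ℝ) ^ (u j).length = 1) (m : Fin (3 + k) → ℕ)
    (hm : ∑ i, (1 / 2 : ℝ) ^ m i ≤ 1) :
    ∑ i, source u ε i * (huffmanCode u i).length ≤ ∑ i, source u ε i * m i := by
  have hk : Nonempty (Fin k) := by
    by_contra h
    simp [not_nonempty_iff.mp h] at hu
  have htail_pos : 0 < ∑ j : Fin k, (1 / 2 : ℝ) ^ m (Fin.natAdd 3 j) :=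
    sum_pos (fun _ _ ↦ by positivity) univ_nonempty
  rw [Fin.sum_univ_add, Fin.sum_univ_three] at hm
  have hhead := head_lagrangian_le (a := m (Fin.castAdd k 0)) (b := m (Fin.castAdd k 1))
    (c := m (Fin.castAdd k 2)) hε0 hε (by linarith)
  have htail := sum_le_sum fun j (_ : j ∈ univ) ↦ mul_le_mul_of_nonneg_left
    (half_pow_mul_succ_le ([true, true, true] ++ u j).length (m (Fin.natAdd 3 j))) hε0
  simp only [mul_add, mul_one, ← mul_assoc, sum_add_distrib, sum_tail_source hu] at htail
  rw [Fin.sum_univ_add, Fin.sum_univ_add]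
  simp only [source, huffmanCode, Fin.append_left, Fin.append_right, Fin.sum_univ_three,
    Matrix.cons_val, List.length_cons, List.length_nil, zero_add, Nat.reduceAdd, Nat.cast_one,
    Nat.cast_ofNat]
  have hkraft := mul_le_mul_of_nonneg_left hm hε0
  simp only [mul_add, mul_sum, mul_one] at hkraft
  linarith

theorem advantage_rivalCode (ε : ℝ) :
    (∑ i ∈ univ.filter (fun i ↦ (rivalCode u i).length < (huffmanCode u i).length),
        source u ε i) -
      (∑ i ∈ univ.filter (fun i ↦ (huffmanCode u i).length < (rivalCode u i).length),
        source u ε i) = 1 / 3 - 17 / 8 * ε := by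
  rw [sum_filter, sum_filter, Fin.sum_univ_add, Fin.sum_univ_add]
  simp only [source, huffmanCode, rivalCode, Fin.append_left, Fin.append_right, lt_irrefl,
    if_false, sum_const_zero, add_zero, Fin.sum_univ_three, Matrix.cons_val, List.length_cons,
    List.length_nil, Nat.reduceAdd, Nat.reduceLT, if_true]
  ring

end Construction

/-- For every n ≥ 4 and δ > 0 there is a source of size n, a Huffman
(expected-length optimal) prefix code h, and a prefix code c whose
competitive advantage over h exceeds 1/3 − δ. -/
theorem exists_advantage_close_to_one_third (n : ℕ) (hn : 4 ≤ n)
    (δ : ℝ) (hδ : 0 < δ) :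
    ∃ (p : Fin n → ℝ) (c h : Fin n → List Bool),
      (∀ i, 0 < p i) ∧ (∑ i, p i = 1) ∧
      (∀ i j, i ≠ j → ¬ (c i <+: c j)) ∧
      (∀ i j, i ≠ j → ¬ (h i <+: h j)) ∧
      (∀ c' : Fin n → List Bool, (∀ i j, i ≠ j → ¬ (c' i <+: c' j)) →
        ∑ i, p i * (h i).length ≤ ∑ i, p i * (c' i).length) ∧
      (∑ i ∈ Finset.univ.filter (fun i => (c i).length < (h i).length), p i)
        - (∑ i ∈ Finset.univ.filter (fun i => (h i).length < (c i).length), p i)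
        > 1/3 - δ := by
  obtain ⟨k, rfl⟩ : ∃ k, n = 3 + (k + 1) := ⟨n - 4, by omega⟩
  have : Nontrivial (Fin (3 + (k + 1))) := Fin.nontrivial_iff_two_le.2 (by omega)
  obtain ⟨ε, hε0, hε, hεδ⟩ : ∃ ε : ℝ, 0 < ε ∧ ε ≤ 1 / 20 ∧ ε ≤ δ / 3 :=
    ⟨min (δ / 3) (1 / 20), lt_min (by positivity) (by norm_num), min_le_right _ _,
      min_le_left _ _⟩
  have hu := sum_half_pow_length_unaryCode k
  refine ⟨source (unaryCode k) ε, rivalCode (unaryCode k), huffmanCode (unaryCode k),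
    source_pos hε0 hε, sum_source hu ε, isPrefixCode_rivalCode (isPrefixCode_unaryCode k),
    isPrefixCode_huffmanCode (isPrefixCode_unaryCode k),
    fun c' hc' ↦ sum_source_mul_length_huffmanCode_le hε0.le hε hu _ ?_, ?_⟩
  · simpa using IsPrefixCode.sum_pow_length_le_one (c := c') hc'
  · rw [advantage_rivalCode]
    linarith
end

section
/- For every positive integer n and every ε with 0 < ε < 4^{−n}, consider the source of size n with probabilities p_k = 2^{−k} − ε for 1 ≤ k ≤ n−1 and p_n = 2^{−n+1} + (n−1)ε. The Shannon–Fano codeword lengths are l_k = ⌈log₂(1/p_k)⌉ = k+1 for 1 ≤ k ≤ n−1 and l_n = n−1. Moreover there is a prefix code (assigning 1^{k−1}0 to symbol k for k < n and 1^{n−1} to symbol n) whose competitive advantage over the Shannon–Fano code equals 1 − p_n ≥ 1 − 2^{−n+2}. -/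
/-!
A probability `x` gets Shannon–Fano length `m` exactly when `2^{-m} ≤ x < 2^{1-m}`. Since
`ε < 4^{-n}`, subtracting `ε` from `2^{-k}` drops it just below that power of two, while adding
`(n-1)ε < 2^{-(n-1)}` to `2^{-(n-1)}` keeps it in the same dyadic interval. The prefix code is then
one bit shorter on every symbol `k < n` and as long on symbol `n`, so its advantage is
`p_1 + ⋯ + p_{n-1} = 1 - p_n`.
-/

open Finset

lemma ceil_logb_two_one_div_eq {m : ℤ} {x : ℝ} (h₁ : (2:ℝ) ^ (-m) ≤ x)
    (h₂ : x < (2:ℝ) ^ (1 - m)) : ⌈Real.logb 2 (1 / x)⌉ = m := by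
  have hx : 0 < x := (zpow_pos two_pos _).trans_le h₁
  have hlog : Int.log 2 x = -m := by
    refine le_antisymm ?_ ((Int.zpow_le_iff_le_log one_lt_two hx).1 (mod_cast h₁))
    rw [← Int.lt_add_one_iff, ← Int.lt_zpow_iff_log_lt one_lt_two hx, neg_add_eq_sub]
    exact_mod_cast h₂
  rw [one_div, ← Nat.cast_ofNat, Real.ceil_logb_natCast (inv_nonneg.2 hx.le), Int.clog_inv,
    hlog, neg_neg]

lemma two_zpow_neg_add_one (k : ℤ) : (2:ℝ) ^ (-(k + 1)) = 2 ^ (-k) / 2 := by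
  rw [neg_add, zpow_add₀ two_ne_zero, zpow_neg_one, div_eq_mul_inv]

lemma ceil_logb_two_one_div_two_zpow_sub {k : ℤ} {ε : ℝ} (hε : 0 < ε)
    (hε' : ε ≤ (2:ℝ) ^ (-(k + 1))) : ⌈Real.logb 2 (1 / (2 ^ (-k) - ε))⌉ = k + 1 := by
  rw [two_zpow_neg_add_one] at hε'
  apply ceil_logb_two_one_div_eq
  · rw [two_zpow_neg_add_one]; linarith
  · rw [show 1 - (k + 1) = -k by ring]; linarith

lemma ceil_logb_two_one_div_two_zpow_add {k : ℤ} {δ : ℝ} (hδ : 0 ≤ δ)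
    (hδ' : δ < (2:ℝ) ^ (-k)) : ⌈Real.logb 2 (1 / (2 ^ (-k) + δ))⌉ = k := by
  apply ceil_logb_two_one_div_eq
  · linarith
  · rw [sub_eq_neg_add, zpow_add_one₀ two_ne_zero]; linarith

lemma four_zpow_neg_le_two_zpow_neg (n : ℕ) : (4:ℝ) ^ (-(n:ℤ)) ≤ 2 ^ (-(n:ℤ)) := by
  simp only [zpow_neg, zpow_natCast]
  gcongr; norm_num

lemma natCast_mul_lt_two_zpow_neg {m : ℕ} {ε : ℝ} (hε : ε < (4:ℝ) ^ (-(m + 1 : ℤ))) :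
    (m:ℝ) * ε < 2 ^ (-(m:ℤ)) := by
  have h4 : (4:ℝ) ^ (-(m + 1 : ℤ)) = (2 ^ (m + 2))⁻¹ * 2 ^ (-(m:ℤ)) := by
    rw [show (4:ℝ) = 2 ^ (2:ℤ) by norm_num, ← zpow_mul, ← zpow_natCast, ← zpow_neg,
      ← zpow_add₀ two_ne_zero]
    congr 1; push_cast; ring
  calc (m:ℝ) * ε ≤ m * 4 ^ (-(m + 1 : ℤ)) := by gcongr
    _ < 2 ^ (m + 2) * 4 ^ (-(m + 1 : ℤ)) := by
        gcongr
        exact_mod_cast (Nat.lt_two_pow_self).trans (Nat.pow_lt_pow_right one_lt_two (by omega))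
    _ = 2 ^ (-(m:ℤ)) := by rw [h4, mul_inv_cancel_left₀ (by positivity)]

lemma sum_Icc_two_zpow_neg (m : ℕ) : ∑ k ∈ Icc 1 m, (2:ℝ) ^ (-(k:ℤ)) = 1 - 2 ^ (-(m:ℤ)) := by
  induction m with
  | zero => simp
  | succ m ih =>
    rw [sum_Icc_succ_top (by omega), ih, Nat.cast_succ, two_zpow_neg_add_one]
    ring

def competitiveAdvantage {α : Type*} (s : Finset α) (p : α → ℝ) (l₁ l₂ : α → ℤ) : ℝ :=
  (∑ k ∈ s, if l₁ k < l₂ k then p k else 0) - ∑ k ∈ s, if l₂ k < l₁ k then p k else 0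

lemma competitiveAdvantage_of_lt {α : Type*} {s : Finset α} {p : α → ℝ} {l₁ l₂ : α → ℤ}
    (h : ∀ k ∈ s, l₁ k < l₂ k) : competitiveAdvantage s p l₁ l₂ = ∑ k ∈ s, p k := by
  unfold competitiveAdvantage
  rw [sum_congr rfl fun k hk => if_pos (h k hk),
    sum_eq_zero fun k hk => if_neg (h k hk).asymm, sub_zero]

lemma competitiveAdvantage_insert_of_eq {α : Type*} [DecidableEq α] {s : Finset α} {a : α}
    {p : α → ℝ} {l₁ l₂ : α → ℤ} (h : l₁ a = l₂ a) :
    competitiveAdvantage (insert a s) p l₁ l₂ = competitiveAdvantage s p l₁ l₂ := by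
  unfold competitiveAdvantage
  by_cases ha : a ∈ s
  · rw [insert_eq_of_mem ha]
  · rw [sum_insert ha, sum_insert ha, if_neg h.not_lt, if_neg h.symm.not_lt, zero_add, zero_add]

/-- The Shannon–Fano construction: for the source p_k = 2^{−k} − ε
(1 ≤ k ≤ n−1), p_n = 2^{−n+1} + (n−1)ε with 0 < ε < 4^{−n}, the
Shannon–Fano lengths are ⌈log₂(1/p_k)⌉ = k+1 for k ≤ n−1 and n−1 for k = n,
and the prefix code assigning 1^{k−1}0 to k < n and 1^{n−1} to n has
competitive advantage 1 − p_n ≥ 1 − 2^{−n+2} over the Shannon–Fano code. -/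
theorem sf_construction (n : ℕ) (hn : 1 ≤ n) (ε : ℝ) (hε : 0 < ε)
    (hε' : ε < (4:ℝ) ^ (-(n:ℤ)))
    (p : ℕ → ℝ)
    (hpk : ∀ k, 1 ≤ k → k ≤ n - 1 → p k = (2:ℝ) ^ (-(k:ℤ)) - ε)
    (hpn : p n = (2:ℝ) ^ (1 - (n:ℤ)) + ((n:ℝ) - 1) * ε)
    (c : ℕ → List Bool)
    (hck : ∀ k, 1 ≤ k → k ≤ n - 1 → c k = List.replicate (k-1) true ++ [false])
    (hcn : c n = List.replicate (n-1) true) :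
    (∀ k : ℕ, 1 ≤ k → k ≤ n - 1 → ⌈Real.logb 2 (1 / p k)⌉ = (k:ℤ) + 1) ∧
    (⌈Real.logb 2 (1 / p n)⌉ = (n:ℤ) - 1) ∧
    ((∑ k ∈ Finset.Icc 1 n,
        if ((c k).length : ℤ) < ⌈Real.logb 2 (1 / p k)⌉ then p k else 0)
      - (∑ k ∈ Finset.Icc 1 n,
        if ⌈Real.logb 2 (1 / p k)⌉ < ((c k).length : ℤ) then p k else 0)
      = 1 - p n) ∧
    1 - p n ≥ 1 - (2:ℝ) ^ (2 - (n:ℤ)) := by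
  obtain ⟨m, rfl⟩ : ∃ m, n = m + 1 := ⟨n - 1, by omega⟩
  simp only [Nat.add_sub_cancel] at hpk hck hcn
  have hpn' : p (m + 1) = 2 ^ (-(m:ℤ)) + m * ε := by rw [hpn]; push_cast; ring_nf
  have hmε := natCast_mul_lt_two_zpow_neg (m := m) (by exact_mod_cast hε')
  have hceil_k : ∀ k, 1 ≤ k → k ≤ m → ⌈Real.logb 2 (1 / p k)⌉ = (k:ℤ) + 1 := fun k hk₁ hk₂ => by
    rw [hpk k hk₁ hk₂]
    refine ceil_logb_two_one_div_two_zpow_sub hε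
      (hε'.le.trans <| (four_zpow_neg_le_two_zpow_neg _).trans ?_)
    exact zpow_le_zpow_right₀ one_le_two (by push_cast; omega)
  have hceil_n : ⌈Real.logb 2 (1 / p (m + 1))⌉ = m := by
    rw [hpn']; exact ceil_logb_two_one_div_two_zpow_add (by positivity) hmε
  refine ⟨hceil_k, by rw [hceil_n]; push_cast; ring, ?_, ?_⟩
  · change competitiveAdvantage _ p (fun k => ((c k).length : ℤ))
      (fun k => ⌈Real.logb 2 (1 / p k)⌉) = _
    rw [← insert_Icc_right_eq_Icc_add_one (by omega),
      competitiveAdvantage_insert_of_eq (by rw [hceil_n, hcn, List.length_replicate]),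
      competitiveAdvantage_of_lt fun k hk => ?_]
    · rw [sum_congr rfl fun k hk => hpk k (mem_Icc.1 hk).1 (mem_Icc.1 hk).2, sum_sub_distrib,
        sum_Icc_two_zpow_neg, sum_const, Nat.card_Icc, hpn', nsmul_eq_mul]
      push_cast; ring
    · obtain ⟨hk₁, hk₂⟩ := mem_Icc.1 hk
      rw [hceil_k k hk₁ hk₂, hck k hk₁ hk₂]
      simp only [List.length_append, List.length_replicate, List.length_singleton]
      omega
  · have hpow : (2:ℝ) ^ (2 - ((m + 1 : ℕ) : ℤ)) = 2 * 2 ^ (-(m:ℤ)) := by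
      rw [show 2 - ((m + 1 : ℕ) : ℤ) = -m + 1 by push_cast; ring, zpow_add_one₀ two_ne_zero,
        mul_comm]
    rw [hpow, hpn']
    linarith
end

section
/- Let a source have alphabet S with a Huffman code H whose codeword lengths satisfy ∑_{x∈S} 2^{−l_H(x)} = 1, and let C be a prefix code with positive competitive advantage over H. Define W = {x : l_C(x) < l_H(x)} and L = {x : l_C(x) > l_H(x)}. Then ∑_{x∈W} 2^{−l_H(x)} < ∑_{x∈L} 2^{−l_H(x)}. -/
/-! Split the alphabet into the win set `W`, the loss set `L` and the tie set. Since
`l_C < l_H` on `W`, each win at least doubles the Kraft weight of its symbol, so comparing the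
Kraft sums of `C` and `H` gives `∑_W 2^{-l_H} + ∑_L 2^{-l_C} ≤ ∑_L 2^{-l_H}`. Positive competitive
advantage forces `C ≠ H`; if `L` is nonempty the middle term is positive, and otherwise `W` is
nonempty and the inequality is already absurd. -/

open Finset

lemma two_mul_half_pow_le_half_pow_of_lt {m n : ℕ} (h : m < n) :
    2 * (1 / 2 : ℝ) ^ n ≤ (1 / 2) ^ m :=
  calc 2 * (1 / 2 : ℝ) ^ n ≤ 2 * (1 / 2) ^ (m + 1) := by
        gcongr 2 * ?_
        exact pow_le_pow_of_le_one (by norm_num) (by norm_num) h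
    _ = (1 / 2) ^ m := by ring

section KraftSums

variable {ι : Type*} [Fintype ι]

lemma sum_eq_sum_filter_lt_add_sum_filter_gt_add_sum_filter_eq {α M : Type*} [LinearOrder α]
    [AddCommMonoid M] (a b : ι → α) (f : ι → M) :
    ∑ i, f i = ∑ i ∈ univ.filter (fun i => a i < b i), f i
      + ∑ i ∈ univ.filter (fun i => b i < a i), f i
      + ∑ i ∈ univ.filter (fun i => a i = b i), f i := by
  simp only [sum_filter, ← sum_add_distrib]
  refine sum_congr rfl fun i _ => ?_
  rcases lt_trichotomy (a i) (b i) with h | h | h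
  · simp [h, h.ne, h.not_gt]
  · simp [h]
  · simp [h, h.ne', h.not_gt]

variable (lH lC : ι → ℕ)

lemma kraft_sum_win_add_loss_le
    (hkraft : ∑ i, (1 / 2 : ℝ) ^ lC i ≤ ∑ i, (1 / 2 : ℝ) ^ lH i) :
    ∑ i ∈ univ.filter (fun i => lC i < lH i), (1 / 2 : ℝ) ^ lH i
      + ∑ i ∈ univ.filter (fun i => lH i < lC i), (1 / 2 : ℝ) ^ lC i
      ≤ ∑ i ∈ univ.filter (fun i => lH i < lC i), (1 / 2 : ℝ) ^ lH i := by
  have hwin : 2 * ∑ i ∈ univ.filter (fun i => lC i < lH i), (1 / 2 : ℝ) ^ lH i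
      ≤ ∑ i ∈ univ.filter (fun i => lC i < lH i), (1 / 2 : ℝ) ^ lC i := by
    rw [mul_sum]
    exact sum_le_sum fun i hi => two_mul_half_pow_le_half_pow_of_lt (mem_filter.1 hi).2
  have htie : ∑ i ∈ univ.filter (fun i => lC i = lH i), (1 / 2 : ℝ) ^ lC i
      = ∑ i ∈ univ.filter (fun i => lC i = lH i), (1 / 2 : ℝ) ^ lH i :=
    sum_congr rfl fun i hi => by rw [(mem_filter.1 hi).2]
  rw [sum_eq_sum_filter_lt_add_sum_filter_gt_add_sum_filter_eq lC lH,
    sum_eq_sum_filter_lt_add_sum_filter_gt_add_sum_filter_eq lC lH] at hkraft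
  linarith

lemma kraft_sum_win_lt_loss_of_ne
    (hkraft : ∑ i, (1 / 2 : ℝ) ^ lC i ≤ ∑ i, (1 / 2 : ℝ) ^ lH i) (hne : lC ≠ lH) :
    ∑ i ∈ univ.filter (fun i => lC i < lH i), (1 / 2 : ℝ) ^ lH i
      < ∑ i ∈ univ.filter (fun i => lH i < lC i), (1 / 2 : ℝ) ^ lH i := by
  have key := kraft_sum_win_add_loss_le lH lC hkraft
  rcases (univ.filter fun i => lH i < lC i).eq_empty_or_nonempty with hL | hL
  · obtain ⟨i, hi⟩ := Function.ne_iff.1 hne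
    have hiW : i ∈ univ.filter (fun i => lC i < lH i) := by
      have : i ∉ univ.filter (fun i => lH i < lC i) := by simp [hL]
      simp only [mem_filter, mem_univ, true_and, not_lt] at this ⊢
      omega
    have hW : 0 < ∑ i ∈ univ.filter (fun i => lC i < lH i), (1 / 2 : ℝ) ^ lH i :=
      sum_pos (fun _ _ => by positivity) ⟨i, hiW⟩
    simp only [hL, sum_empty] at key
    linarith
  · have hLC : 0 < ∑ i ∈ univ.filter (fun i => lH i < lC i), (1 / 2 : ℝ) ^ lC i :=
      sum_pos (fun _ _ => by positivity) hL
    linarith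

end KraftSums

theorem win_kraft_lt_loss_kraft_general (n : ℕ) (p : Fin n → ℝ)
    (lH lC : Fin n → ℕ)
    (hHkraft : ∑ i, ((1:ℝ)/2) ^ (lH i) = 1)
    (hCkraft : ∑ i, ((1:ℝ)/2) ^ (lC i) ≤ 1)
    (hadv : 0 < (∑ i ∈ Finset.univ.filter (fun i => lC i < lH i), p i)
              - (∑ i ∈ Finset.univ.filter (fun i => lH i < lC i), p i)) :
    ∑ i ∈ Finset.univ.filter (fun i => lC i < lH i), ((1:ℝ)/2) ^ (lH i) <
    ∑ i ∈ Finset.univ.filter (fun i => lH i < lC i), ((1:ℝ)/2) ^ (lH i) := by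
  have hne : lC ≠ lH := by
    rintro rfl
    simp at hadv
  exact kraft_sum_win_lt_loss_of_ne lH lC (hCkraft.trans hHkraft.ge) hne

/-- If a prefix code C has positive competitive advantage over a Huffman code
H (complete, expected-length optimal), then the Huffman-Kraft sum of the win
set W is strictly less than that of the loss set L. -/
theorem win_kraft_lt_loss_kraft (n : ℕ) (p : Fin n → ℝ)
    (hpos : ∀ i, 0 < p i) (hsum : ∑ i, p i = 1)
    (lH lC : Fin n → ℕ)
    (hHkraft : ∑ i, ((1:ℝ)/2) ^ (lH i) = 1)
    (hCkraft : ∑ i, ((1:ℝ)/2) ^ (lC i) ≤ 1)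
    (hopt : ∀ l' : Fin n → ℕ, (∑ i, ((1:ℝ)/2) ^ (l' i) ≤ 1) →
      ∑ i, p i * lH i ≤ ∑ i, p i * l' i)
    (hadv : 0 < (∑ i ∈ Finset.univ.filter (fun i => lC i < lH i), p i)
              - (∑ i ∈ Finset.univ.filter (fun i => lH i < lC i), p i)) :
    ∑ i ∈ Finset.univ.filter (fun i => lC i < lH i), ((1:ℝ)/2) ^ (lH i) <
    ∑ i ∈ Finset.univ.filter (fun i => lH i < lC i), ((1:ℝ)/2) ^ (lH i) :=
  win_kraft_lt_loss_kraft_general n p lH lC hHkraft hCkraft hadv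
end

section
/- For any source with a Huffman code H, if U and V are disjoint subsets of the source alphabet whose Huffman-Kraft sums satisfy K(U) < K(V), then there exists a prefix code C (a length assignment satisfying the Kraft inequality) such that l_C(x) = l_H(x) − 1 for x ∈ U, l_C(x) = l_H(x) + k for x ∈ V for some integer k with K(U) ≤ (1 − 2^{−k})K(V), and l_C(x) = l_H(x) otherwise; in particular U = {x : l_C(x) < l_H(x)} and V = {x : l_C(x) > l_H(x)}. -/
/-!
Shorten every codeword of `U` by one and lengthen every codeword of `V` by `k`. Relative to the
Huffman code this adds `K(U)` to the Kraft sum and removes `(1 - 2^{-k}) K(V)`, and since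
`K(U) < K(V)` some `k` makes the gain at least the loss, so the Kraft inequality survives.
Shortening is honest because a complete code on at least two symbols has no codeword of length `0`.
-/

open Finset

lemma exists_le_one_sub_pow_mul {r a b : ℝ} (hr₀ : 0 ≤ r) (hr₁ : r < 1) (ha : 0 ≤ a)
    (hab : a < b) : ∃ k, 1 ≤ k ∧ a ≤ (1 - r ^ k) * b := by
  have hb : 0 < b := ha.trans_lt hab
  obtain ⟨m, hm⟩ := exists_pow_lt_of_lt_one (div_pos (sub_pos.2 hab) hb) hr₁
  have hrm : r ^ m * b < b - a := (lt_div_iff₀ hb).1 hm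
  have hstep : r ^ (m + 1) ≤ r ^ m := pow_le_pow_of_le_one hr₀ hr₁.le m.le_succ
  exact ⟨m + 1, m.succ_pos, by nlinarith⟩

section Kraft

variable {ι : Type*} [DecidableEq ι]

lemma one_le_length_of_kraft_le_one [Fintype ι] {l : ι → ℕ} (hl : ∑ i, ((1:ℝ)/2) ^ l i ≤ 1)
    {x y : ι} (hxy : x ≠ y) : 1 ≤ l x := by
  by_contra! h
  have hpair : ∑ i ∈ {x, y}, ((1:ℝ)/2) ^ l i ≤ ∑ i, ((1:ℝ)/2) ^ l i :=
    sum_le_sum_of_subset_of_nonneg (subset_univ _) fun i _ _ => by positivity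
  rw [sum_pair hxy, Nat.lt_one_iff.1 h, pow_zero] at hpair
  have : (0:ℝ) < (1/2) ^ l y := by positivity
  linarith

def shiftLengths (l : ι → ℕ) (U V : Finset ι) (k : ℕ) (x : ι) : ℕ :=
  if x ∈ U then l x - 1 else if x ∈ V then l x + k else l x

variable {l : ι → ℕ} {U V : Finset ι} {k : ℕ} {x : ι}

lemma shiftLengths_of_mem_left (hx : x ∈ U) : shiftLengths l U V k x = l x - 1 := if_pos hx

lemma shiftLengths_of_mem_right (hUV : Disjoint U V) (hx : x ∈ V) :
    shiftLengths l U V k x = l x + k := by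
  rw [shiftLengths, if_neg (disjoint_right.1 hUV hx), if_pos hx]

lemma shiftLengths_of_notMem (hxU : x ∉ U) (hxV : x ∉ V) : shiftLengths l U V k x = l x := by
  rw [shiftLengths, if_neg hxU, if_neg hxV]

lemma half_pow_shiftLengths (hUV : Disjoint U V) (hU : ∀ x ∈ U, 1 ≤ l x) (x : ι) :
    ((1:ℝ)/2) ^ shiftLengths l U V k x = ((1:ℝ)/2) ^ l x
      + (if x ∈ U then ((1:ℝ)/2) ^ l x else 0)
      - (if x ∈ V then (1 - ((1:ℝ)/2) ^ k) * ((1:ℝ)/2) ^ l x else 0) := by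
  by_cases hxU : x ∈ U
  · have hxV : x ∉ V := disjoint_left.1 hUV hxU
    obtain ⟨m, hm⟩ := Nat.exists_eq_add_of_le' (hU x hxU)
    rw [shiftLengths_of_mem_left hxU, if_pos hxU, if_neg hxV, hm, Nat.add_sub_cancel, pow_succ]
    ring
  by_cases hxV : x ∈ V
  · rw [shiftLengths_of_mem_right hUV hxV, if_neg hxU, if_pos hxV, pow_add]
    ring
  · rw [shiftLengths_of_notMem hxU hxV, if_neg hxU, if_neg hxV]
    ring

lemma kraft_shiftLengths [Fintype ι] (hUV : Disjoint U V) (hU : ∀ x ∈ U, 1 ≤ l x) :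
    ∑ i, ((1:ℝ)/2) ^ shiftLengths l U V k i = ∑ i, ((1:ℝ)/2) ^ l i
      + ∑ x ∈ U, ((1:ℝ)/2) ^ l x - (1 - ((1:ℝ)/2) ^ k) * ∑ x ∈ V, ((1:ℝ)/2) ^ l x := by
  simp only [half_pow_shiftLengths hUV hU, sum_sub_distrib, sum_add_distrib, sum_ite_mem,
    univ_inter, mul_sum]

lemma filter_shiftLengths_lt [Fintype ι] (hUV : Disjoint U V) (hU : ∀ x ∈ U, 1 ≤ l x) :
    univ.filter (fun x => shiftLengths l U V k x < l x) = U := by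
  ext x
  rw [mem_filter, and_iff_right (mem_univ x)]
  by_cases hxU : x ∈ U
  · simp only [shiftLengths_of_mem_left hxU, hxU, iff_true]
    have := hU x hxU
    omega
  by_cases hxV : x ∈ V
  · simp only [shiftLengths_of_mem_right hUV hxV, hxU, iff_false]
    omega
  · simp [shiftLengths_of_notMem hxU hxV, hxU]

lemma filter_lt_shiftLengths [Fintype ι] (hUV : Disjoint U V) (hk : 1 ≤ k) :
    univ.filter (fun x => l x < shiftLengths l U V k x) = V := by
  ext x
  rw [mem_filter, and_iff_right (mem_univ x)]
  by_cases hxU : x ∈ U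
  · simp only [shiftLengths_of_mem_left hxU, disjoint_left.1 hUV hxU, iff_false]
    omega
  by_cases hxV : x ∈ V
  · simp only [shiftLengths_of_mem_right hUV hxV, hxV, iff_true]
    omega
  · simp [shiftLengths_of_notMem hxU hxV, hxV]

end Kraft

/-- Given a complete Huffman code and disjoint sets U, V with Huffman-Kraft
sums K(U) < K(V), there is a length assignment lC satisfying the Kraft
inequality which shortens exactly the codewords of U (by one) and lengthens
exactly those of V (by k, where K(U) ≤ (1 − 2^{−k})K(V)). -/
theorem exists_code_winning_on_U (n : ℕ) (lH : Fin n → ℕ)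
    (hHkraft : ∑ i, ((1:ℝ)/2) ^ (lH i) = 1)
    (U V : Finset (Fin n)) (hdisj : Disjoint U V)
    (hK : ∑ x ∈ U, ((1:ℝ)/2) ^ (lH x) < ∑ x ∈ V, ((1:ℝ)/2) ^ (lH x)) :
    ∃ (k : ℕ) (lC : Fin n → ℕ), 1 ≤ k ∧
      (∑ x ∈ U, ((1:ℝ)/2) ^ (lH x))
        ≤ (1 - ((1:ℝ)/2) ^ k) * (∑ x ∈ V, ((1:ℝ)/2) ^ (lH x)) ∧
      (∑ i, ((1:ℝ)/2) ^ (lC i) ≤ 1) ∧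
      (∀ x ∈ U, lC x + 1 = lH x) ∧
      (∀ x ∈ V, lC x = lH x + k) ∧
      (∀ x, x ∉ U → x ∉ V → lC x = lH x) ∧
      U = Finset.univ.filter (fun x => lC x < lH x) ∧
      V = Finset.univ.filter (fun x => lH x < lC x) := by
  have hKU : 0 ≤ ∑ x ∈ U, ((1:ℝ)/2) ^ lH x := sum_nonneg fun x _ => by positivity
  obtain ⟨k, hk, hgain⟩ := exists_le_one_sub_pow_mul (r := 1/2) (by norm_num) (by norm_num) hKU hK
  obtain ⟨y, hy⟩ : V.Nonempty := nonempty_of_sum_ne_zero (hKU.trans_lt hK).ne'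
  have hU : ∀ x ∈ U, 1 ≤ lH x := fun x hx => one_le_length_of_kraft_le_one hHkraft.le
    (ne_of_mem_of_not_mem hy (disjoint_left.1 hdisj hx)).symm
  refine ⟨k, shiftLengths lH U V k, hk, hgain, ?_, fun x hx => ?_,
    fun x hx => shiftLengths_of_mem_right hdisj hx,
    fun x hxU hxV => shiftLengths_of_notMem hxU hxV,
    (filter_shiftLengths_lt hdisj hU).symm, (filter_lt_shiftLengths hdisj hk).symm⟩
  · rw [kraft_shiftLengths hdisj hU, hHkraft]
    linarith
  · rw [shiftLengths_of_mem_left hx]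
    exact Nat.sub_add_cancel (hU x hx)
end

section
/- For any source and any Huffman code, if U and V are disjoint subsets of the source alphabet with Huffman-Kraft sums K(U) < K(V) and probabilities P(U) > P(V), then the Huffman code is not competitively optimal: there exists a prefix code whose competitive advantage over the Huffman code is positive. -/
/-!
Shorten every codeword of `U` by one bit and lengthen every codeword of `V` by `M` bits.
This adds `K(U)` to the Kraft sum and removes `(1 - 2⁻ᴹ) K(V)`, which exceeds `K(U)` once `M`
is large because `K(U) < K(V)`; so the Kraft inequality survives and the new lengths are those
of a prefix code. That code wins exactly on `U` and loses exactly on `V`, so its competitive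
advantage is `P(U) - P(V) > 0`. Shortening is possible because a code with Kraft sum
at most `1` and `K(V) > 0` has no empty codeword outside `V`.
-/

open Finset

namespace KraftCode

variable {ι : Type*}

noncomputable def kraftSum (l : ι → ℕ) (s : Finset ι) : ℝ := ∑ i ∈ s, (1 / 2 : ℝ) ^ l i

noncomputable def competitiveAdvantage [Fintype ι] (p : ι → ℝ) (lC lH : ι → ℕ) : ℝ :=
  ∑ i ∈ univ.filter (fun i => lC i < lH i), p i - ∑ i ∈ univ.filter (fun i => lH i < lC i), p i

def shortenLengthen [DecidableEq ι] (l : ι → ℕ) (U V : Finset ι) (M : ℕ) (i : ι) : ℕ :=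
  if i ∈ U then l i - 1 else if i ∈ V then l i + M else l i

theorem kraftSum_nonneg (l : ι → ℕ) (s : Finset ι) : 0 ≤ kraftSum l s :=
  sum_nonneg fun _ _ => by positivity

theorem pos_of_kraftSum_le_one [Fintype ι] [DecidableEq ι] {l : ι → ℕ} {V : Finset ι}
    (hl : kraftSum l univ ≤ 1) (hV : 0 < kraftSum l V) {i : ι} (hi : i ∉ V) : 0 < l i := by
  by_contra h
  have : 1 + kraftSum l V ≤ 1 :=
    calc 1 + kraftSum l V = kraftSum l (insert i V) := by
          rw [kraftSum, kraftSum, sum_insert hi, Nat.eq_zero_of_not_pos h, pow_zero]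
      _ ≤ kraftSum l univ :=
          sum_le_sum_of_subset_of_nonneg (subset_univ _) fun _ _ _ => by positivity
      _ ≤ 1 := hl
  linarith

theorem exists_pos_le_one_sub_half_pow_mul {a b : ℝ} (ha : 0 ≤ a) (hab : a < b) :
    ∃ M : ℕ, 0 < M ∧ a ≤ (1 - (1 / 2 : ℝ) ^ M) * b := by
  have hb : 0 < b := ha.trans_lt hab
  obtain ⟨M, hM⟩ := exists_pow_lt_of_lt_one (div_pos (sub_pos.mpr hab) hb)
    (by norm_num : (1 / 2 : ℝ) < 1)
  have hMb : (1 / 2 : ℝ) ^ M * b < b - a := (lt_div_iff₀ hb).mp hM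
  refine ⟨M, Nat.pos_of_ne_zero ?_, by linarith⟩
  rintro rfl
  linarith

section shortenLengthen

variable [DecidableEq ι] {l : ι → ℕ} {U V : Finset ι} {M : ℕ}

theorem half_pow_shortenLengthen (hU : ∀ i ∈ U, 0 < l i) (hUV : Disjoint U V) (i : ι) :
    (1 / 2 : ℝ) ^ shortenLengthen l U V M i =
      (1 / 2 : ℝ) ^ l i + (if i ∈ U then (1 / 2 : ℝ) ^ l i else 0)
        - (if i ∈ V then (1 - (1 / 2 : ℝ) ^ M) * (1 / 2 : ℝ) ^ l i else 0) := by
  by_cases hiU : i ∈ U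
  · obtain ⟨k, hk⟩ := Nat.exists_eq_add_of_lt (hU i hiU)
    simp only [shortenLengthen, hiU, disjoint_left.mp hUV hiU, if_true, if_false, hk]
    simp only [zero_add, Nat.add_sub_cancel, pow_succ]
    ring
  · by_cases hiV : i ∈ V
    · simp only [shortenLengthen, hiU, hiV, if_true, if_false, pow_add]
      ring
    · simp [shortenLengthen, hiU, hiV]

theorem kraftSum_shortenLengthen [Fintype ι] (hU : ∀ i ∈ U, 0 < l i) (hUV : Disjoint U V) :
    kraftSum (shortenLengthen l U V M) univ =
      kraftSum l univ + kraftSum l U - (1 - (1 / 2 : ℝ) ^ M) * kraftSum l V := by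
  simp only [kraftSum, half_pow_shortenLengthen hU hUV, sum_add_distrib, sum_sub_distrib,
    sum_ite_mem, univ_inter, mul_sum]

theorem filter_shortenLengthen_lt [Fintype ι] (hU : ∀ i ∈ U, 0 < l i) (hUV : Disjoint U V) :
    univ.filter (fun i => shortenLengthen l U V M i < l i) = U := by
  ext i
  have := hU i
  have : i ∈ U → i ∉ V := fun h => disjoint_left.mp hUV h
  rw [mem_filter_univ, shortenLengthen]
  split_ifs <;> grind

theorem filter_lt_shortenLengthen [Fintype ι] (hU : ∀ i ∈ U, 0 < l i) (hUV : Disjoint U V)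
    (hM : 0 < M) : univ.filter (fun i => l i < shortenLengthen l U V M i) = V := by
  ext i
  have := hU i
  have : i ∈ U → i ∉ V := fun h => disjoint_left.mp hUV h
  rw [mem_filter_univ, shortenLengthen]
  split_ifs <;> grind

theorem competitiveAdvantage_shortenLengthen [Fintype ι] (p : ι → ℝ) (hU : ∀ i ∈ U, 0 < l i)
    (hUV : Disjoint U V) (hM : 0 < M) :
    competitiveAdvantage p (shortenLengthen l U V M) l = ∑ i ∈ U, p i - ∑ i ∈ V, p i := by
  rw [competitiveAdvantage, filter_shortenLengthen_lt hU hUV, filter_lt_shortenLengthen hU hUV hM]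

end shortenLengthen

end KraftCode

open KraftCode in
theorem huffman_not_competitively_optimal_of_kraft_prob_disagree_general
    (n : ℕ) (p : Fin n → ℝ)
    (lH : Fin n → ℕ) (hHkraft : ∑ i, ((1:ℝ)/2) ^ (lH i) = 1)
    (U V : Finset (Fin n)) (hdisj : Disjoint U V)
    (hK : ∑ x ∈ U, ((1:ℝ)/2) ^ (lH x) < ∑ x ∈ V, ((1:ℝ)/2) ^ (lH x))
    (hP : ∑ x ∈ V, p x < ∑ x ∈ U, p x) :
    ∃ lC : Fin n → ℕ, (∑ i, ((1:ℝ)/2) ^ (lC i) ≤ 1) ∧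
      0 < (∑ i ∈ Finset.univ.filter (fun i => lC i < lH i), p i)
        - (∑ i ∈ Finset.univ.filter (fun i => lH i < lC i), p i) := by
  change kraftSum lH univ = 1 at hHkraft
  change kraftSum lH U < kraftSum lH V at hK
  have hKV : 0 < kraftSum lH V := (kraftSum_nonneg lH U).trans_lt hK
  have hU : ∀ i ∈ U, 0 < lH i := fun i hi =>
    pos_of_kraftSum_le_one hHkraft.le hKV (disjoint_left.mp hdisj hi)
  obtain ⟨M, hM, hMK⟩ := exists_pos_le_one_sub_half_pow_mul (kraftSum_nonneg lH U) hK
  refine ⟨shortenLengthen lH U V M, ?kraft, ?advantage⟩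
  case kraft =>
    change kraftSum _ univ ≤ 1
    rw [kraftSum_shortenLengthen hU hdisj]
    linarith
  case advantage =>
    change 0 < competitiveAdvantage p _ lH
    rw [competitiveAdvantage_shortenLengthen p hU hdisj hM]
    linarith

/-- If disjoint sets U, V satisfy K(U) < K(V) (Huffman-Kraft sums) and
P(U) > P(V), then the Huffman code is not competitively optimal: some prefix
code has positive competitive advantage over it. -/
theorem huffman_not_competitively_optimal_of_kraft_prob_disagree
    (n : ℕ) (p : Fin n → ℝ) (hpos : ∀ i, 0 < p i) (hsum : ∑ i, p i = 1)
    (lH : Fin n → ℕ) (hHkraft : ∑ i, ((1:ℝ)/2) ^ (lH i) = 1)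
    (U V : Finset (Fin n)) (hdisj : Disjoint U V)
    (hK : ∑ x ∈ U, ((1:ℝ)/2) ^ (lH x) < ∑ x ∈ V, ((1:ℝ)/2) ^ (lH x))
    (hP : ∑ x ∈ V, p x < ∑ x ∈ U, p x) :
    ∃ lC : Fin n → ℕ, (∑ i, ((1:ℝ)/2) ^ (lC i) ≤ 1) ∧
      0 < (∑ i ∈ Finset.univ.filter (fun i => lC i < lH i), p i)
        - (∑ i ∈ Finset.univ.filter (fun i => lH i < lC i), p i) :=
  huffman_not_competitively_optimal_of_kraft_prob_disagree_general n p lH hHkraft U V hdisj hK hP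
end

section
/- Let l : S → ℕ be the length function of a complete, strongly monotone prefix code for a source with probability P, and let A be a nonempty proper subset of S with Kraft sum K(A) = ∑_{x∈A} 2^{−l(x)} having binary expansion 0.b_1b_2...b_k (b_k = 1). Then there exists a partition of A into disjoint (possibly empty) subsets A_1,...,A_k with K(A_i) = b_i·2^{−i} for each i. -/
/-!
Writing `K(A) = ∑_{b_i = 1} 2^{-i}` and scaling by `2^M` for `M` large turns every term on
both sides into a power of two in `ℕ`.
A finite family of natural numbers whose values form a divisibility chain contains a
subfamily summing to any target `t ≤` its total that all of its members divide: greedily take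
a largest member. When the total is the sum `2^{e_1} + ⋯ + 2^{e_r}` of distinct powers of two
with `e_1` largest, every member is at most the total `< 2^{e_1 + 1}`, hence divides
`2^{e_1}`; so a subfamily of total `2^{e_1}` splits off, and induction on `r` splits the rest.
-/

open Finset

theorem exists_subset_sum_eq_of_dvd {α : Type*} [DecidableEq α] (w : α → ℕ) (A : Finset α)
    (hchain : ∀ x ∈ A, ∀ y ∈ A, w y ≤ w x → w y ∣ w x) (t : ℕ) (hdvd : ∀ x ∈ A, w x ∣ t)
    (hle : t ≤ ∑ x ∈ A, w x) : ∃ B ⊆ A, ∑ x ∈ B, w x = t := by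
  induction A using Finset.strongInduction generalizing t with
  | H A ih =>
  rcases Nat.eq_zero_or_pos t with rfl | ht
  · exact ⟨∅, empty_subset A, sum_empty⟩
  obtain ⟨x, hxA, hxmax⟩ := A.exists_max_image w (nonempty_of_sum_ne_zero (ht.trans_le hle).ne')
  have hxt : w x ≤ t := Nat.le_of_dvd ht (hdvd x hxA)
  obtain ⟨B, hBA, hB⟩ := ih (A.erase x) (erase_ssubset hxA)
    (fun y hy z hz => hchain y (mem_of_mem_erase hy) z (mem_of_mem_erase hz)) (t - w x)
    (fun y hy => Nat.dvd_sub (hdvd y (mem_of_mem_erase hy))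
      (hchain x hxA y (mem_of_mem_erase hy) (hxmax y (mem_of_mem_erase hy))))
    (by rw [← add_sum_erase A w hxA] at hle; omega)
  refine ⟨insert x B, insert_subset hxA (hBA.trans (erase_subset x A)), ?_⟩
  rw [sum_insert fun h => notMem_erase x A (hBA h), hB]
  omega

theorem exists_subset_sum_eq_two_pow {α : Type*} [DecidableEq α] (w : α → ℕ) (A : Finset α)
    (hw : ∀ x ∈ A, ∃ m, w x = 2 ^ m) (m : ℕ) (hle : 2 ^ m ≤ ∑ x ∈ A, w x)
    (hlt : ∑ x ∈ A, w x < 2 ^ (m + 1)) : ∃ B ⊆ A, ∑ x ∈ B, w x = 2 ^ m := by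
  refine exists_subset_sum_eq_of_dvd w A (fun x hx y hy hyx => ?_) _ (fun x hx => ?_) hle
  · obtain ⟨j, hj⟩ := hw x hx
    obtain ⟨j', hj'⟩ := hw y hy
    rw [hj, hj'] at hyx ⊢
    exact pow_dvd_pow 2 ((Nat.pow_le_pow_iff_right one_lt_two).mp hyx)
  · obtain ⟨j, hj⟩ := hw x hx
    have : 2 ^ j < 2 ^ (m + 1) :=
      hj ▸ (single_le_sum (fun y _ => Nat.zero_le (w y)) hx).trans_lt hlt
    rw [hj]
    exact pow_dvd_pow 2 (Nat.lt_succ_iff.mp ((Nat.pow_lt_pow_iff_right one_lt_two).mp this))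

theorem exists_partition_sum_eq_two_pow {α ι : Type*} [DecidableEq α] [DecidableEq ι]
    [Nonempty ι] (w : α → ℕ) (I : Finset ι) (e : ι → ℕ) (he : Set.InjOn e I) (A : Finset α)
    (hw : ∀ x ∈ A, ∃ m, w x = 2 ^ m) (hA : ∑ x ∈ A, w x = ∑ i ∈ I, 2 ^ e i) :
    ∃ f : α → ι, (∀ x ∈ A, f x ∈ I) ∧ ∀ i ∈ I, ∑ x ∈ A with f x = i, w x = 2 ^ e i := by
  induction I using Finset.induction_on_max_value e generalizing A with
  | empty =>
    refine ⟨fun _ => Classical.arbitrary ι, fun x hx => ?_, fun i hi => absurd hi (notMem_empty i)⟩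
    obtain ⟨m, hm⟩ := hw x hx
    have := single_le_sum (fun y _ => Nat.zero_le (w y)) hx
    rw [hA, sum_empty, hm] at this
    exact absurd this (Nat.two_pow_pos m).not_ge
  | insert a s has hmax ih =>
  have hlt : ∀ i ∈ s, e i < e a := fun i hi => (hmax i hi).lt_of_ne fun h =>
    has (he (mem_insert_of_mem hi) (mem_insert_self a s) h ▸ hi)
  have hrest : ∑ i ∈ s, 2 ^ e i < 2 ^ e a := by
    rw [← sum_image fun i hi j hj => he (mem_insert_of_mem hi) (mem_insert_of_mem hj)]
    exact Nat.geomSum_lt le_rfl (by simpa using hlt)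
  rw [sum_insert has] at hA
  obtain ⟨B, hBA, hB⟩ := exists_subset_sum_eq_two_pow w A hw (e a) (by omega)
    (by rw [pow_succ]; omega)
  obtain ⟨f, hfs, hf⟩ := ih (he.mono (by simp)) (A \ B)
    (fun x hx => hw x (mem_sdiff.mp hx).1)
    (by have := sum_sdiff (f := w) hBA; omega)
  refine ⟨fun x => if x ∈ B then a else f x, fun x hx => ?_, fun i hi => ?_⟩
  · by_cases hxB : x ∈ B
    · simp [hxB]
    · simpa [hxB] using mem_insert_of_mem (hfs x (mem_sdiff.mpr ⟨hx, hxB⟩))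
  · rcases mem_insert.mp hi with rfl | hi
    · convert hB using 2
      ext x
      by_cases hxB : x ∈ B
      · simp [hxB, hBA hxB]
      · simp only [mem_filter, hxB, if_false, iff_false, not_and]
        exact fun hx h => has (h ▸ hfs x (mem_sdiff.mpr ⟨hx, hxB⟩))
    · rw [← hf i hi]
      congr 1
      ext x
      by_cases hxB : x ∈ B
      · simp only [mem_filter, mem_sdiff, hxB, if_true, not_true_eq_false, and_false, false_and,
          iff_false, not_and]
        exact fun _ h => has (h ▸ hi)
      · simp [hxB]

theorem cast_two_pow_sub {M a : ℕ} (h : a ≤ M) :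
    ((2 ^ (M - a) : ℕ) : ℝ) = 2 ^ M * (1 / 2 : ℝ) ^ a := by
  rw [Nat.cast_pow, Nat.cast_ofNat, pow_sub₀ _ two_ne_zero h, one_div_pow, one_div]

theorem cast_sum_two_pow_sub {ι : Type*} (s : Finset ι) (l : ι → ℕ) {M : ℕ}
    (h : ∀ i ∈ s, l i ≤ M) :
    ((∑ i ∈ s, 2 ^ (M - l i) : ℕ) : ℝ) = 2 ^ M * ∑ i ∈ s, (1 / 2 : ℝ) ^ l i := by
  rw [Nat.cast_sum, mul_sum]
  exact sum_congr rfl fun i hi => cast_two_pow_sub (h i hi)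

theorem exists_partition_sum_eq_half_pow {α : Type*} [DecidableEq α] (l : α → ℕ)
    (I : Finset ℕ) (A : Finset α) (hA : ∑ x ∈ A, (1 / 2 : ℝ) ^ l x = ∑ i ∈ I, (1 / 2 : ℝ) ^ i) :
    ∃ f : α → ℕ, (∀ x ∈ A, f x ∈ I) ∧
      ∀ i ∈ I, ∑ x ∈ A with f x = i, (1 / 2 : ℝ) ^ l x = (1 / 2) ^ i := by
  set M := A.sup l + I.sup id
  have hlM : ∀ x ∈ A, l x ≤ M := fun x hx => (le_sup hx).trans (Nat.le_add_right _ _)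
  have hIM : ∀ i ∈ I, i ≤ M := fun i hi => (le_sup (f := id) hi).trans (Nat.le_add_left _ _)
  have hscaled : ∑ x ∈ A, 2 ^ (M - l x) = ∑ i ∈ I, 2 ^ (M - i) := by
    exact_mod_cast (cast_sum_two_pow_sub A l hlM).trans
      ((congrArg _ hA).trans (cast_sum_two_pow_sub I id hIM).symm)
  obtain ⟨f, hfI, hf⟩ := exists_partition_sum_eq_two_pow _ I (M - ·)
    (fun i hi j hj h => by have := hIM i hi; have := hIM j hj; simp only at h; omega)
    A (fun x _ => ⟨_, rfl⟩) hscaled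
  refine ⟨f, hfI, fun i hi => mul_left_cancel₀ (pow_ne_zero M two_ne_zero) ?_⟩
  rw [← cast_two_pow_sub (hIM i hi),
    ← cast_sum_two_pow_sub _ l fun x hx => hlM x (mem_filter.mp hx).1, hf i hi]

theorem huffman_kraft_partition_general (n : ℕ) (l : Fin n → ℕ)
    (A : Finset (Fin n))
    (k : ℕ) (b : ℕ → ℕ) (hb : ∀ i, b i ≤ 1)
    (hK : ∑ x ∈ A, ((1:ℝ)/2) ^ (l x)
        = ∑ i ∈ Finset.Icc 1 k, (b i : ℝ) * ((1:ℝ)/2) ^ i) :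
    ∃ As : ℕ → Finset (Fin n),
      (∀ i j, i ≠ j → Disjoint (As i) (As j)) ∧
      ((Finset.Icc 1 k).biUnion As = A) ∧
      (∀ i ∈ Finset.Icc 1 k,
        ∑ x ∈ As i, ((1:ℝ)/2) ^ (l x) = (b i : ℝ) * ((1:ℝ)/2) ^ i) := by
  have hb01 : ∀ i, b i = 0 ∨ b i = 1 := fun i => by have := hb i; omega
  set I := (Icc 1 k).filter (b · = 1)
  have hKI : ∑ x ∈ A, (1 / 2 : ℝ) ^ l x = ∑ i ∈ I, (1 / 2 : ℝ) ^ i := by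
    rw [hK, sum_filter]
    refine sum_congr rfl fun i _ => ?_
    rcases hb01 i with h | h <;> simp [h]
  obtain ⟨f, hfI, hf⟩ := exists_partition_sum_eq_half_pow l I A hKI
  refine ⟨fun i => A.filter (f · = i), fun i j hij => disjoint_filter.mpr fun x _ hi hj =>
    hij (hi ▸ hj), biUnion_filter_eq_of_maps_to fun x hx => (mem_filter.mp (hfI x hx)).1,
    fun i hi => ?_⟩
  rcases hb01 i with h | h
  · have hempty : A.filter (f · = i) = ∅ := filter_eq_empty_iff.mpr fun x hx hfx => by
      have := (mem_filter.mp (hfI x hx)).2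
      rw [hfx] at this
      omega
    simp [hempty, h]
  · simpa [h] using hf i (mem_filter.mpr ⟨hi, h⟩)

/-- Huffman-Kraft partition lemma: for a complete, strongly monotone prefix
code with lengths l and a nonempty proper subset A whose Kraft sum has binary
expansion 0.b₁b₂…b_k with b_k = 1, there is a partition A₁,…,A_k of A with
K(A_i) = b_i·2^{−i}. -/
theorem huffman_kraft_partition (n : ℕ) (p : Fin n → ℝ) (l : Fin n → ℕ)
    (hpos : ∀ i, 0 < p i) (hsum : ∑ i, p i = 1)
    (hcomplete : ∑ i, ((1:ℝ)/2) ^ (l i) = 1)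
    (hsm : ∀ (X Y : Finset (Fin n)) (i j : ℕ),
      (∑ x ∈ X, ((1:ℝ)/2) ^ (l x)) = ((1:ℝ)/2) ^ i →
      (∑ x ∈ Y, ((1:ℝ)/2) ^ (l x)) = ((1:ℝ)/2) ^ j →
      i < j → ∑ x ∈ Y, p x ≤ ∑ x ∈ X, p x)
    (A : Finset (Fin n)) (hA : A.Nonempty) (hAprop : A ≠ Finset.univ)
    (k : ℕ) (b : ℕ → ℕ) (hb : ∀ i, b i ≤ 1) (hbk : b k = 1)
    (hK : ∑ x ∈ A, ((1:ℝ)/2) ^ (l x)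
        = ∑ i ∈ Finset.Icc 1 k, (b i : ℝ) * ((1:ℝ)/2) ^ i) :
    ∃ As : ℕ → Finset (Fin n),
      (∀ i j, i ≠ j → Disjoint (As i) (As j)) ∧
      ((Finset.Icc 1 k).biUnion As = A) ∧
      (∀ i ∈ Finset.Icc 1 k,
        ∑ x ∈ As i, ((1:ℝ)/2) ^ (l x) = (b i : ℝ) * ((1:ℝ)/2) ^ i) :=
  huffman_kraft_partition_general n l A k b hb hK
end

section
/- Let a source have a strongly monotone complete prefix code (e.g., a Huffman code), and let A, B be subsets of the alphabet with Kraft sums K(A) = K(B) = 2^{−i} for some integer i ≥ 0, with |A| ≥ 2. Then P(A) ≤ 2·P(B). -/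
/-!
Since `|A| ≥ 2`, every codeword length in `A` exceeds `i`, so all Kraft weights of `A` are
multiples of `2^{-(i+1)}` and a greedy choice (largest weights first) splits `A` into two halves
of Kraft sum `2^{-(i+1)}` each. Strong monotonicity compares each half with `B`, whose Kraft sum
`2^{-i}` is strictly larger, so each half has probability at most `P(B)`.
-/

open Finset

theorem exists_subset_sum_two_pow_eq {ι : Type*} [DecidableEq ι] (k : ι → ℕ) (s : Finset ι) :
    ∀ t : ℕ, (∀ x ∈ s, 2 ^ k x ∣ t) → t ≤ ∑ x ∈ s, 2 ^ k x →
      ∃ u ⊆ s, ∑ x ∈ u, 2 ^ k x = t := by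
  induction s using Finset.strongInduction with
  | _ s ih =>
    intro t hdvd hle
    rcases Nat.eq_zero_or_pos t with rfl | ht
    · exact ⟨∅, empty_subset s, sum_empty⟩
    obtain ⟨x, hx, hmax⟩ := s.exists_max_image k (nonempty_of_sum_ne_zero (f := fun x => 2 ^ k x) (by omega))
    have hxt : 2 ^ k x ≤ t := Nat.le_of_dvd ht (hdvd x hx)
    -- the largest weight is a multiple of every other one
    have hdvd' : ∀ y ∈ s.erase x, 2 ^ k y ∣ t - 2 ^ k x := fun y hy =>
      have hys := mem_of_mem_erase hy
      Nat.dvd_sub (hdvd y hys) (Nat.pow_dvd_pow 2 (hmax y hys))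
    have hle' : t - 2 ^ k x ≤ ∑ y ∈ s.erase x, 2 ^ k y := by
      have := add_sum_erase s (fun y => 2 ^ k y) hx
      omega
    obtain ⟨u, hu, husum⟩ := ih (s.erase x) (erase_ssubset hx) _ hdvd' hle'
    have hxu : x ∉ u := fun h => (mem_erase.mp (hu h)).1 rfl
    refine ⟨insert x u, insert_subset hx (hu.trans (erase_subset x s)), ?_⟩
    rw [sum_insert hxu, husum]
    omega

theorem two_pow_sub_eq_two_pow_mul_half_pow {a L : ℕ} (h : a ≤ L) :
    (2 : ℝ) ^ (L - a) = 2 ^ L * (1 / 2) ^ a := by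
  rw [pow_sub₀ 2 two_ne_zero h, one_div, inv_pow]

theorem exists_subset_kraft_sum_eq {ι : Type*} [DecidableEq ι] (l : ι → ℕ) (A : Finset ι)
    (j : ℕ) (hj : ∀ x ∈ A, j ≤ l x)
    (hle : ((1 : ℝ) / 2) ^ j ≤ ∑ x ∈ A, ((1 : ℝ) / 2) ^ l x) :
    ∃ u ⊆ A, ∑ x ∈ u, ((1 : ℝ) / 2) ^ l x = ((1 : ℝ) / 2) ^ j := by
  set L := A.sup l ⊔ j
  have hlL : ∀ x ∈ A, l x ≤ L := fun x hx => le_sup_of_le_left (le_sup hx)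
  have hscale : ∀ v ⊆ A,
      ((∑ x ∈ v, 2 ^ (L - l x) : ℕ) : ℝ) = 2 ^ L * ∑ x ∈ v, ((1 : ℝ) / 2) ^ l x := by
    intro v hv
    push_cast
    rw [mul_sum]
    exact sum_congr rfl fun x hx => two_pow_sub_eq_two_pow_mul_half_pow (hlL x (hv hx))
  have htarget : ((2 ^ (L - j) : ℕ) : ℝ) = 2 ^ L * ((1 : ℝ) / 2) ^ j := by
    push_cast
    exact two_pow_sub_eq_two_pow_mul_half_pow le_sup_right
  obtain ⟨u, huA, hu⟩ := exists_subset_sum_two_pow_eq (fun x => L - l x) A (2 ^ (L - j))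
    (fun x hx => Nat.pow_dvd_pow 2 (by have := hj x hx; omega))
    (by
      have : ((2 ^ (L - j) : ℕ) : ℝ) ≤ ((∑ x ∈ A, 2 ^ (L - l x) : ℕ) : ℝ) := by
        rw [htarget, hscale A subset_rfl]
        gcongr
      exact_mod_cast this)
  refine ⟨u, huA, mul_left_cancel₀ (pow_ne_zero L two_ne_zero) ?_⟩
  rw [← hscale u huA, ← htarget, hu]

theorem lt_of_mem_of_kraft_sum_eq {ι : Type*} (l : ι → ℕ) (A : Finset ι) (i : ℕ)
    (hK : ∑ x ∈ A, ((1 : ℝ) / 2) ^ l x = ((1 : ℝ) / 2) ^ i) (hcard : 2 ≤ A.card) :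
    ∀ x ∈ A, i < l x := by
  intro x hx
  obtain ⟨y, hy, hyx⟩ := exists_mem_ne hcard x
  have hlt : ((1 : ℝ) / 2) ^ l x < ((1 : ℝ) / 2) ^ i := by
    rw [← hK]
    exact single_lt_sum (f := fun x => ((1 : ℝ) / 2) ^ l x) hyx hx hy (by positivity)
      fun _ _ _ => by positivity
  exact (pow_lt_pow_iff_right_of_lt_one₀ (by norm_num : (0 : ℝ) < 1 / 2) (by norm_num)).mp hlt

theorem exists_subset_kraft_sum_eq_half {ι : Type*} [DecidableEq ι] (l : ι → ℕ)
    (A : Finset ι) (i : ℕ) (hK : ∑ x ∈ A, ((1 : ℝ) / 2) ^ l x = ((1 : ℝ) / 2) ^ i)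
    (hcard : 2 ≤ A.card) :
    ∃ u ⊆ A, ∑ x ∈ u, ((1 : ℝ) / 2) ^ l x = ((1 : ℝ) / 2) ^ (i + 1) ∧
      ∑ x ∈ A \ u, ((1 : ℝ) / 2) ^ l x = ((1 : ℝ) / 2) ^ (i + 1) := by
  have hhalf : ((1 : ℝ) / 2) ^ (i + 1) ≤ ∑ x ∈ A, ((1 : ℝ) / 2) ^ l x :=
    hK ▸ pow_le_pow_of_le_one (by norm_num) (by norm_num) i.le_succ
  obtain ⟨u, huA, hu⟩ := exists_subset_kraft_sum_eq l A (i + 1)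
    (lt_of_mem_of_kraft_sum_eq l A i hK hcard) hhalf
  refine ⟨u, huA, hu, ?_⟩
  have hsplit := sum_sdiff huA (f := fun x => ((1 : ℝ) / 2) ^ l x)
  rw [hu, hK] at hsplit
  rw [pow_succ] at hsplit ⊢
  linarith

theorem prob_le_two_mul_general (n : ℕ) (p : Fin n → ℝ) (l : Fin n → ℕ)
    (hsm : ∀ (X Y : Finset (Fin n)) (i j : ℕ),
      (∑ x ∈ X, ((1:ℝ)/2) ^ (l x)) = ((1:ℝ)/2) ^ i →
      (∑ x ∈ Y, ((1:ℝ)/2) ^ (l x)) = ((1:ℝ)/2) ^ j →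
      i < j → ∑ x ∈ Y, p x ≤ ∑ x ∈ X, p x)
    (A B : Finset (Fin n)) (i : ℕ)
    (hKA : ∑ x ∈ A, ((1:ℝ)/2) ^ (l x) = ((1:ℝ)/2) ^ i)
    (hKB : ∑ x ∈ B, ((1:ℝ)/2) ^ (l x) = ((1:ℝ)/2) ^ i)
    (hcard : 2 ≤ A.card) :
    ∑ x ∈ A, p x ≤ 2 * ∑ x ∈ B, p x := by
  obtain ⟨u, huA, hKu, hKrest⟩ := exists_subset_kraft_sum_eq_half l A i hKA hcard
  have hu := hsm B u i (i + 1) hKB hKu i.lt_succ_self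
  have hrest := hsm B (A \ u) i (i + 1) hKB hKrest i.lt_succ_self
  rw [← sum_sdiff huA]
  linarith

/-- For a strongly monotone complete prefix code, if K(A) = K(B) = 2^{−i}
and |A| ≥ 2, then P(A) ≤ 2·P(B). -/
theorem prob_le_two_mul (n : ℕ) (p : Fin n → ℝ) (l : Fin n → ℕ)
    (hpos : ∀ i, 0 < p i) (hsum : ∑ i, p i = 1)
    (hcomplete : ∑ i, ((1:ℝ)/2) ^ (l i) = 1)
    (hsm : ∀ (X Y : Finset (Fin n)) (i j : ℕ),
      (∑ x ∈ X, ((1:ℝ)/2) ^ (l x)) = ((1:ℝ)/2) ^ i →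
      (∑ x ∈ Y, ((1:ℝ)/2) ^ (l x)) = ((1:ℝ)/2) ^ j →
      i < j → ∑ x ∈ Y, p x ≤ ∑ x ∈ X, p x)
    (A B : Finset (Fin n)) (i : ℕ)
    (hKA : ∑ x ∈ A, ((1:ℝ)/2) ^ (l x) = ((1:ℝ)/2) ^ i)
    (hKB : ∑ x ∈ B, ((1:ℝ)/2) ^ (l x) = ((1:ℝ)/2) ^ i)
    (hcard : 2 ≤ A.card) :
    ∑ x ∈ A, p x ≤ 2 * ∑ x ∈ B, p x :=
  prob_le_two_mul_general n p l hsm A B i hKA hKB hcard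
end

section
/- Let U be a subset of a source alphabet whose Kraft sum K(U) (with respect to a complete prefix code) is an integer multiple of 2^{−i} for some i ≥ 0, and let A ⊆ U satisfy 0 < K(A) < 2^{−j} for some integer j ≥ i. Then there exists B ⊆ U − A with K(A ∪ B) = 2^{−j}. -/
/-!
Multiplying by a common power `2^N` turns every Kraft weight into a power of two in `ℕ` and
`2^{-j}` into some `2^k`. Now enlarge `A` inside `U` one element at a time, always by an element
of least weight `w` outside it. Then `d = min w 2^k` divides `2^k`, `K(U)` and every weight
outside `A`, hence also the positive deficit `2^k - K(A)`, so `d` is at most the deficit; and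
`d ≠ 2^k` because `0 < K(A) < 2^k`. So the new element never overshoots, and the deficit
eventually reaches `0`.
-/

open Finset

section PowersOfTwo

variable {ι : Type*} [DecidableEq ι] (e : ι → ℕ) {k : ℕ}

theorem exists_mem_sdiff_two_pow_le_sub {A U : Finset ι} (hAU : A ⊆ U)
    (hU : 2 ^ k ∣ ∑ x ∈ U, 2 ^ e x) (hA0 : 0 < ∑ x ∈ A, 2 ^ e x)
    (hAk : ∑ x ∈ A, 2 ^ e x < 2 ^ k) :
    ∃ x ∈ U \ A, 2 ^ e x ≤ 2 ^ k - ∑ x ∈ A, 2 ^ e x := by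
  have hdeficit : ∀ d, d ∣ 2 ^ k → (∀ y ∈ U \ A, d ∣ 2 ^ e y) →
      d ≤ 2 ^ k - ∑ x ∈ A, 2 ^ e x := by
    intro d hdk hdy
    have hdU : d ∣ ∑ x ∈ U \ A, 2 ^ e x + ∑ x ∈ A, 2 ^ e x := by
      rw [sum_sdiff hAU]; exact hdk.trans hU
    have hdA : d ∣ ∑ x ∈ A, 2 ^ e x := (Nat.dvd_add_right (dvd_sum hdy)).1 hdU
    exact Nat.le_of_dvd (by omega) (Nat.dvd_sub hdk hdA)
  obtain ⟨y, hy, hyk⟩ : ∃ y ∈ U \ A, e y < k := by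
    by_contra! h
    have := hdeficit (2 ^ k) dvd_rfl fun y hy => pow_dvd_pow 2 (h y hy)
    omega
  obtain ⟨x, hx, hmin⟩ := exists_min_image (U \ A) e ⟨y, hy⟩
  exact ⟨x, hx, hdeficit _ (pow_dvd_pow 2 ((hmin y hy).trans hyk.le))
    fun z hz => pow_dvd_pow 2 (hmin z hz)⟩

theorem exists_superset_sum_two_pow_eq {A U : Finset ι} (hAU : A ⊆ U)
    (hU : 2 ^ k ∣ ∑ x ∈ U, 2 ^ e x) (hA0 : 0 < ∑ x ∈ A, 2 ^ e x)
    (hAk : ∑ x ∈ A, 2 ^ e x ≤ 2 ^ k) :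
    ∃ C, A ⊆ C ∧ C ⊆ U ∧ ∑ x ∈ C, 2 ^ e x = 2 ^ k := by
  rcases hAk.eq_or_lt with hAk | hAk
  · exact ⟨A, subset_rfl, hAU, hAk⟩
  obtain ⟨x, hx, hxk⟩ := exists_mem_sdiff_two_pow_le_sub e hAU hU hA0 hAk
  have hxA : x ∉ A := (mem_sdiff.1 hx).2
  obtain ⟨C, hAC, hCU, hC⟩ :=
    exists_superset_sum_two_pow_eq (insert_subset (mem_sdiff.1 hx).1 hAU) hU
      (by rw [sum_insert hxA]; positivity) (by rw [sum_insert hxA]; omega)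
  exact ⟨C, (subset_insert x A).trans hAC, hCU, hC⟩
termination_by #(U \ A)
decreasing_by rw [sdiff_insert]; exact card_erase_lt_of_mem hx

end PowersOfTwo

theorem one_half_pow_mul_two_pow {k N : ℕ} (h : k ≤ N) :
    ((1 : ℝ) / 2) ^ k * 2 ^ N = 2 ^ (N - k) := by
  rw [← Nat.sub_add_cancel h, pow_add, Nat.add_sub_cancel, mul_left_comm, ← mul_pow]
  norm_num

theorem sum_one_half_pow_mul_two_pow {ι : Type*} (l : ι → ℕ) (S : Finset ι) {N : ℕ}
    (hN : ∀ x ∈ S, l x ≤ N) :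
    (∑ x ∈ S, ((1 : ℝ) / 2) ^ l x) * 2 ^ N = ((∑ x ∈ S, 2 ^ (N - l x) : ℕ) : ℝ) := by
  push_cast
  rw [sum_mul]
  exact sum_congr rfl fun x hx => one_half_pow_mul_two_pow (hN x hx)

theorem kraft_completion_general (n : ℕ) (l : Fin n → ℕ)
    (U : Finset (Fin n)) (i : ℕ) (m : ℕ)
    (hU : ∑ x ∈ U, ((1:ℝ)/2) ^ (l x) = (m : ℝ) * ((1:ℝ)/2) ^ i)
    (A : Finset (Fin n)) (hAU : A ⊆ U) (j : ℕ) (hij : i ≤ j)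
    (hApos : 0 < ∑ x ∈ A, ((1:ℝ)/2) ^ (l x))
    (hAlt : ∑ x ∈ A, ((1:ℝ)/2) ^ (l x) < ((1:ℝ)/2) ^ j) :
    ∃ B ⊆ U \ A, ∑ x ∈ A ∪ B, ((1:ℝ)/2) ^ (l x) = ((1:ℝ)/2) ^ j := by
  set N := univ.sup l ⊔ j
  have hjN : j ≤ N := le_sup_right
  have scale := fun S : Finset (Fin n) => sum_one_half_pow_mul_two_pow l S
    fun x _ => (le_sup (mem_univ x)).trans (le_sup_left : univ.sup l ≤ N)
  have hUN : ((∑ x ∈ U, 2 ^ (N - l x) : ℕ) : ℝ) = ((m * 2 ^ (N - i) : ℕ) : ℝ) := by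
    rw [← scale, hU, mul_assoc, one_half_pow_mul_two_pow (hij.trans hjN)]
    push_cast; rfl
  have hdvd : 2 ^ (N - j) ∣ ∑ x ∈ U, 2 ^ (N - l x) := by
    rw [Nat.cast_inj.1 hUN]
    exact (pow_dvd_pow 2 (by omega)).mul_left m
  have hA0 : 0 < ∑ x ∈ A, 2 ^ (N - l x) := by
    exact_mod_cast scale A ▸ mul_pos hApos (by positivity)
  have hAj : ∑ x ∈ A, 2 ^ (N - l x) ≤ 2 ^ (N - j) := by
    have := mul_lt_mul_of_pos_right hAlt (by positivity : (0 : ℝ) < 2 ^ N)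
    rw [scale, one_half_pow_mul_two_pow hjN] at this
    exact_mod_cast this.le
  obtain ⟨C, hAC, hCU, hC⟩ :=
    exists_superset_sum_two_pow_eq (fun x => N - l x) hAU hdvd hA0 hAj
  refine ⟨C \ A, sdiff_subset_sdiff hCU subset_rfl, ?_⟩
  rw [union_sdiff_of_subset hAC]
  refine mul_right_cancel₀ (by positivity : (2 : ℝ) ^ N ≠ 0) ?_
  rw [scale, hC, one_half_pow_mul_two_pow hjN]
  push_cast; rfl

/-- Kraft completion lemma: if U has Kraft sum an integer multiple of 2^{−i}
(for a complete prefix code), A ⊆ U and 0 < K(A) < 2^{−j} with j ≥ i, then A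
can be completed inside U to a set of Kraft sum exactly 2^{−j}. -/
theorem kraft_completion (n : ℕ) (l : Fin n → ℕ)
    (hcomplete : ∑ i, ((1:ℝ)/2) ^ (l i) = 1)
    (U : Finset (Fin n)) (i : ℕ) (m : ℕ)
    (hU : ∑ x ∈ U, ((1:ℝ)/2) ^ (l x) = (m : ℝ) * ((1:ℝ)/2) ^ i)
    (A : Finset (Fin n)) (hAU : A ⊆ U) (j : ℕ) (hij : i ≤ j)
    (hApos : 0 < ∑ x ∈ A, ((1:ℝ)/2) ^ (l x))
    (hAlt : ∑ x ∈ A, ((1:ℝ)/2) ^ (l x) < ((1:ℝ)/2) ^ j) :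
    ∃ B ⊆ U \ A, ∑ x ∈ A ∪ B, ((1:ℝ)/2) ^ (l x) = ((1:ℝ)/2) ^ j :=
  kraft_completion_general n l U i m hU A hAU j hij hApos hAlt
end

section
/- Let a source have a strongly monotone complete prefix code and let A, B be subsets of the alphabet with Kraft sums satisfying 2K(B) ≤ 2^{−i} ≤ K(A) for some integer i. Then P(A) ≥ P(B), and equality is possible only if K(A) = 2K(B). -/
/-!
Scale all Kraft sums by `2 ^ M`, `M` the longest codeword length: codeword `x` gets the weight
`2 ^ (M - l x)` and the whole alphabet the weight `2 ^ M`. Greedily merging equal powers of two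
shows that `A` contains a set `X` of Kraft sum `2 ^ (-a)` with `a ≤ i`, and since weights come in
powers of two, adding the lightest remaining letters one at a time completes `B` to a set `Y` of
Kraft sum exactly `2 ^ (-(a + 1))`. Strong monotonicity and positivity of `p` then give
`P(B) ≤ P(Y) ≤ P(X) ≤ P(A)`, and equality forces `B = Y` and `X = A`, so `K(A) = 2 K(B)`.
-/

open Finset

section TwoPowSums

variable {α : Type*} [DecidableEq α] (e : α → ℕ)

theorem exists_subset_sum_eq_two_pow_of_two_pow_le (k : ℕ) (S : Finset α)
    (hS : 2 ^ k ≤ ∑ x ∈ S, 2 ^ e x) :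
    ∃ X ⊆ S, ∃ k', k ≤ k' ∧ ∑ x ∈ X, 2 ^ e x = 2 ^ k' := by
  induction k generalizing S with
  | zero =>
    obtain ⟨x, hx⟩ : S.Nonempty :=
      nonempty_of_sum_ne_zero (lt_of_lt_of_le (by positivity) hS).ne'
    exact ⟨{x}, singleton_subset_iff.2 hx, e x, Nat.zero_le _, sum_singleton _ _⟩
  | succ k ih =>
    obtain ⟨X₁, hX₁S, k₁, hkk₁, hX₁⟩ :=
      ih S (le_trans (Nat.pow_le_pow_right two_pos k.le_succ) hS)
    rcases hkk₁.lt_or_eq with hlt | rfl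
    · exact ⟨X₁, hX₁S, k₁, hlt, hX₁⟩
    have hsplit := sum_sdiff hX₁S (f := fun x => 2 ^ e x)
    obtain ⟨X₂, hX₂S, k₂, hkk₂, hX₂⟩ := ih (S \ X₁) (by rw [pow_succ] at hS; omega)
    rcases hkk₂.lt_or_eq with hlt | rfl
    · exact ⟨X₂, hX₂S.trans sdiff_subset, k₂, hlt, hX₂⟩
    refine ⟨X₁ ∪ X₂, union_subset hX₁S (hX₂S.trans sdiff_subset), k + 1, le_rfl, ?_⟩
    rw [sum_union (disjoint_sdiff.mono_right hX₂S), hX₁, hX₂, pow_succ, mul_two]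

variable [Fintype α] {M : ℕ} (htot : ∑ x, 2 ^ e x = 2 ^ M)
include htot

/-- The lightest letter outside `B` fits into the gap: its weight divides every weight outside
`B`, hence the weight of `B`, hence also `2 ^ m - ∑ B` unless it exceeds `2 ^ m`. -/
theorem exists_notMem_add_sum_le {m : ℕ} (hm : m ≤ M) {B : Finset α} (hB : B.Nonempty)
    (hlt : ∑ x ∈ B, 2 ^ e x < 2 ^ m) :
    ∃ x ∉ B, 2 ^ e x + ∑ x ∈ B, 2 ^ e x ≤ 2 ^ m := by
  have hsplit := sum_sdiff (subset_univ B) (f := fun x => 2 ^ e x)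
  have hmM : 2 ^ m ≤ 2 ^ M := Nat.pow_le_pow_right two_pos hm
  have hC : (univ \ B).Nonempty := by
    rw [nonempty_iff_ne_empty]
    rintro hC
    simp only [hC, sum_empty] at hsplit
    omega
  obtain ⟨x, hxC, hxmin⟩ := exists_min_image (univ \ B) e hC
  refine ⟨x, (mem_sdiff.1 hxC).2, ?_⟩
  have hdvdC : 2 ^ e x ∣ ∑ y ∈ univ \ B, 2 ^ e y :=
    dvd_sum fun y hy => pow_dvd_pow 2 (hxmin y hy)
  have hxM : e x ≤ M := by
    have := single_le_sum (f := fun y => 2 ^ e y) (fun _ _ => Nat.zero_le _) hxC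
    exact (Nat.pow_le_pow_iff_right one_lt_two).1 (by omega)
  have hdvdB : 2 ^ e x ∣ ∑ y ∈ B, 2 ^ e y := by
    have := Nat.dvd_sub (pow_dvd_pow 2 hxM) hdvdC
    rwa [← htot, ← hsplit, Nat.add_sub_cancel_left] at this
  have hBpos : 0 < ∑ y ∈ B, 2 ^ e y := sum_pos (fun _ _ => by positivity) hB
  rcases le_or_gt (e x) m with hxm | hmx
  · have := Nat.le_of_dvd (by omega) (Nat.dvd_sub (pow_dvd_pow 2 hxm) hdvdB)
    omega
  · have := Nat.le_of_dvd hBpos ((pow_dvd_pow 2 hmx.le).trans hdvdB)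
    omega

theorem exists_superset_sum_eq_two_pow {m : ℕ} (hm : m ≤ M) {B : Finset α} (hB : B.Nonempty)
    (hle : ∑ x ∈ B, 2 ^ e x ≤ 2 ^ m) :
    ∃ Y, B ⊆ Y ∧ ∑ x ∈ Y, 2 ^ e x = 2 ^ m := by
  induction hgap : 2 ^ m - ∑ x ∈ B, 2 ^ e x using Nat.strong_induction_on generalizing B with
  | _ g ih =>
    rcases hle.lt_or_eq with hlt | heq
    · obtain ⟨x, hxB, hx⟩ := exists_notMem_add_sum_le e htot hm hB hlt
      have hins := sum_insert hxB (f := fun x => 2 ^ e x)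
      obtain ⟨Y, hBY, hY⟩ := ih _ (by have := Nat.one_le_two_pow (n := e x); omega)
        (insert_nonempty x B) (by omega) rfl
      exact ⟨Y, (subset_insert x B).trans hBY, hY⟩
    · exact ⟨B, subset_rfl, heq⟩

theorem exists_subset_superset_sum_eq_two_pow {A B : Finset α} {k : ℕ} (hB : B.Nonempty)
    (hBk : 2 * ∑ x ∈ B, 2 ^ e x ≤ 2 ^ k) (hkA : 2 ^ k ≤ ∑ x ∈ A, 2 ^ e x) :
    ∃ X ⊆ A, ∃ Y, B ⊆ Y ∧ ∃ c < M,
      ∑ x ∈ X, 2 ^ e x = 2 ^ (c + 1) ∧ ∑ x ∈ Y, 2 ^ e x = 2 ^ c := by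
  obtain ⟨X, hXA, k', hkk', hX⟩ := exists_subset_sum_eq_two_pow_of_two_pow_le e k A hkA
  have hk'M : k' ≤ M := by
    have := sum_le_sum_of_subset (f := fun x => 2 ^ e x) (subset_univ X)
    rw [hX, htot] at this
    exact (Nat.pow_le_pow_iff_right one_lt_two).1 this
  have hBpos : 0 < ∑ x ∈ B, 2 ^ e x := sum_pos (fun _ _ => by positivity) hB
  have hkk'' := Nat.pow_le_pow_right two_pos hkk'
  obtain ⟨c, rfl⟩ : ∃ c, k' = c + 1 :=
    Nat.exists_eq_add_one.2 (Nat.pos_of_ne_zero fun h => by rw [h] at hkk''; omega)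
  obtain ⟨Y, hBY, hY⟩ := exists_superset_sum_eq_two_pow e htot (m := c) (by omega) hB
    (by rw [pow_succ] at hkk''; omega)
  exact ⟨X, hXA, Y, hBY, c, by omega, hX, hY⟩

end TwoPowSums

theorem Finset.eq_of_subset_of_sum_le {ι M : Type*} [AddCommMonoid M] [PartialOrder M]
    [IsOrderedCancelAddMonoid M] {f : ι → M} {s t : Finset ι} (hf : ∀ x ∈ t, 0 < f x)
    (hst : s ⊆ t) (h : ∑ x ∈ t, f x ≤ ∑ x ∈ s, f x) : s = t := by
  by_contra hne
  obtain ⟨x, hxt, hxs⟩ := exists_of_ssubset (ssubset_of_subset_of_ne hst hne)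
  exact (sum_lt_sum_of_subset hst hxt hxs (hf x hxt) fun y hy _ => (hf y hy).le).not_ge h

theorem half_pow_sub_eq_div {a M : ℕ} (h : a ≤ M) :
    ((1 : ℝ) / 2) ^ (M - a) = 2 ^ a / 2 ^ M := by
  obtain ⟨d, rfl⟩ := Nat.exists_eq_add_of_le h
  rw [Nat.add_sub_cancel_left, pow_add, one_div, inv_pow]
  field_simp

theorem sum_half_pow_eq_div {ι : Type*} (l : ι → ℕ) {M : ℕ} (hM : ∀ x, l x ≤ M)
    (S : Finset ι) :
    ∑ x ∈ S, ((1 : ℝ) / 2) ^ l x = ((∑ x ∈ S, 2 ^ (M - l x) : ℕ) : ℝ) / 2 ^ M := by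
  push_cast
  rw [sum_div]
  refine sum_congr rfl fun x _ => ?_
  rw [← half_pow_sub_eq_div (Nat.sub_le M (l x)), Nat.sub_sub_self (hM x)]

theorem exists_two_pow_between {a b M : ℕ} {i : ℤ} (hb : 0 < b)
    (h1 : 2 * ((b : ℝ) / 2 ^ M) ≤ 2 ^ (-i)) (h2 : (2 : ℝ) ^ (-i) ≤ a / 2 ^ M) :
    ∃ k : ℕ, 2 * b ≤ 2 ^ k ∧ 2 ^ k ≤ a := by
  have hz : (2 : ℝ) ^ (-i) * 2 ^ M = 2 ^ ((M : ℤ) - i) := by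
    rw [sub_eq_neg_add, zpow_add₀ two_ne_zero, zpow_natCast]
  rw [mul_div_assoc', div_le_iff₀ (by positivity), hz] at h1
  rw [le_div_iff₀ (by positivity), hz] at h2
  have hnonneg : 0 ≤ (M : ℤ) - i :=
    (one_le_zpow_iff_right₀ one_lt_two).1 (le_trans (by norm_cast; omega) h1)
  obtain ⟨k, hk⟩ := Int.eq_ofNat_of_zero_le hnonneg
  rw [hk, zpow_natCast] at h1 h2
  exact ⟨k, by exact_mod_cast h1, by exact_mod_cast h2⟩

theorem prob_ge_of_kraft_general (n : ℕ) (p : Fin n → ℝ) (l : Fin n → ℕ)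
    (hpos : ∀ i, 0 < p i)
    (hcomplete : ∑ i, ((1:ℝ)/2) ^ (l i) = 1)
    (hsm : ∀ (X Y : Finset (Fin n)) (a b : ℕ),
      (∑ x ∈ X, ((1:ℝ)/2) ^ (l x)) = ((1:ℝ)/2) ^ a →
      (∑ x ∈ Y, ((1:ℝ)/2) ^ (l x)) = ((1:ℝ)/2) ^ b →
      a < b → ∑ x ∈ Y, p x ≤ ∑ x ∈ X, p x)
    (A B : Finset (Fin n)) (i : ℤ)
    (h1 : 2 * ∑ x ∈ B, ((1:ℝ)/2) ^ (l x) ≤ (2:ℝ) ^ (-i))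
    (h2 : (2:ℝ) ^ (-i) ≤ ∑ x ∈ A, ((1:ℝ)/2) ^ (l x)) :
    ∑ x ∈ B, p x ≤ ∑ x ∈ A, p x ∧
      (∑ x ∈ A, p x = ∑ x ∈ B, p x →
        ∑ x ∈ A, ((1:ℝ)/2) ^ (l x) = 2 * ∑ x ∈ B, ((1:ℝ)/2) ^ (l x)) := by
  obtain rfl | hB := B.eq_empty_or_nonempty
  · have hA : A.Nonempty := nonempty_of_sum_ne_zero (h2.trans_lt' (by positivity)).ne'
    have hPA := sum_pos (fun x _ => hpos x) hA
    simp only [sum_empty]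
    exact ⟨hPA.le, fun h => absurd h hPA.ne'⟩
  set M := univ.sup l
  have hK := sum_half_pow_eq_div l (M := M) fun x => le_sup (mem_univ x)
  have htot : ∑ x, 2 ^ (M - l x) = 2 ^ M := by
    rw [hK, div_eq_one_iff_eq (by positivity)] at hcomplete
    exact_mod_cast hcomplete
  obtain ⟨k, hkB, hkA⟩ := exists_two_pow_between (sum_pos (fun _ _ => by positivity) hB)
    (hK B ▸ h1) (hK A ▸ h2)
  obtain ⟨X, hXA, Y, hBY, c, hcM, hX, hY⟩ :=
    exists_subset_superset_sum_eq_two_pow _ htot hB hkB hkA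
  have hKX : ∑ x ∈ X, ((1:ℝ)/2) ^ (l x) = ((1:ℝ)/2) ^ (M - (c + 1)) := by
    rw [hK, hX, half_pow_sub_eq_div hcM]
    norm_num
  have hKY : ∑ x ∈ Y, ((1:ℝ)/2) ^ (l x) = ((1:ℝ)/2) ^ (M - (c + 1) + 1) := by
    rw [show M - (c + 1) + 1 = M - c by omega, hK, hY, half_pow_sub_eq_div hcM.le]
    norm_num
  have hPYX := hsm X Y _ _ hKX hKY (lt_add_one _)
  have hPBY := sum_le_sum_of_subset_of_nonneg hBY fun x _ _ => (hpos x).le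
  have hPXA := sum_le_sum_of_subset_of_nonneg hXA fun x _ _ => (hpos x).le
  refine ⟨by linarith, fun hPAB => ?_⟩
  obtain rfl : B = Y := eq_of_subset_of_sum_le (fun x _ => hpos x) hBY (by linarith)
  obtain rfl : X = A := eq_of_subset_of_sum_le (fun x _ => hpos x) hXA (by linarith)
  rw [hKX, hKY, pow_succ]
  ring

/-- For a strongly monotone complete prefix code, if 2K(B) ≤ 2^{−i} ≤ K(A)
for some integer i, then P(A) ≥ P(B), with equality possible only if
K(A) = 2K(B). -/
theorem prob_ge_of_kraft (n : ℕ) (p : Fin n → ℝ) (l : Fin n → ℕ)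
    (hpos : ∀ i, 0 < p i) (hsum : ∑ i, p i = 1)
    (hcomplete : ∑ i, ((1:ℝ)/2) ^ (l i) = 1)
    (hsm : ∀ (X Y : Finset (Fin n)) (a b : ℕ),
      (∑ x ∈ X, ((1:ℝ)/2) ^ (l x)) = ((1:ℝ)/2) ^ a →
      (∑ x ∈ Y, ((1:ℝ)/2) ^ (l x)) = ((1:ℝ)/2) ^ b →
      a < b → ∑ x ∈ Y, p x ≤ ∑ x ∈ X, p x)
    (A B : Finset (Fin n)) (i : ℤ)
    (h1 : 2 * ∑ x ∈ B, ((1:ℝ)/2) ^ (l x) ≤ (2:ℝ) ^ (-i))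
    (h2 : (2:ℝ) ^ (-i) ≤ ∑ x ∈ A, ((1:ℝ)/2) ^ (l x)) :
    ∑ x ∈ B, p x ≤ ∑ x ∈ A, p x ∧
      (∑ x ∈ A, p x = ∑ x ∈ B, p x →
        ∑ x ∈ A, ((1:ℝ)/2) ^ (l x) = 2 * ∑ x ∈ B, ((1:ℝ)/2) ^ (l x)) :=
  prob_ge_of_kraft_general n p l hpos hcomplete hsm A B i h1 h2
end

section
/- For any source, let U and V be disjoint subsets of the alphabet with Huffman-Kraft sums satisfying K(U) < 2^{−i} ≤ K(V) for some integer i ≥ 0. Then P(U) < 2·P(V). -/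
/-!
Scale the Kraft weights `2^{-l x}` to the integers `2^{L - l x}`: sets of powers of two dividing
`2^d` whose sum is at least `2^d` contain a subset summing to exactly `2^d`. Since `K(U) < 2^{-i}`,
every codeword of `U` is longer than `i`, and the codewords longer than `i` have total Kraft sum a
multiple of `2^{-i}` (the others contribute multiples of `2^{-i}` to the total `1`). Hence `U` can
be completed by further codewords longer than `i` to a set `A` with `K(A) = 2^{-i}`, and `A` splits
into two halves of Kraft sum `2^{-(i+1)}`. Likewise `V` contains a set `V'` with `K(V') = 2^{-b}`,
`b ≤ i`. Strong monotonicity bounds the probability of either half by `P(V') ≤ P(V)`, and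
`P(U) < P(A)` because `A \ U` is nonempty.
-/

open Finset

variable {ι : Type*}

section PowersOfTwo

variable {w : ι → ℕ} {d : ℕ}

lemma dvd_two_pow_of_dvd_two_pow_succ_of_ne {a : ℕ} (h : a ∣ 2 ^ (d + 1)) (hne : a ≠ 2 ^ (d + 1)) :
    a ∣ 2 ^ d := by
  obtain ⟨m, hm, rfl⟩ := (Nat.dvd_prime_pow Nat.prime_two).1 h
  exact pow_dvd_pow 2 (Nat.lt_succ_iff.1 (hm.lt_of_ne (by rintro rfl; exact hne rfl)))

theorem exists_subset_sum_eq_two_pow_s18 {S : Finset ι} (hS : ∀ x ∈ S, w x ∣ 2 ^ d)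
    (hd : 2 ^ d ≤ ∑ x ∈ S, w x) : ∃ T ⊆ S, ∑ x ∈ T, w x = 2 ^ d := by
  classical
  induction d generalizing S with
  | zero =>
    obtain ⟨x, hx⟩ := nonempty_of_sum_ne_zero (by simp at hd; omega : ∑ x ∈ S, w x ≠ 0)
    exact ⟨{x}, singleton_subset_iff.2 hx, by simpa using hS x hx⟩
  | succ d ih =>
    by_cases hbig : ∃ x ∈ S, w x = 2 ^ (d + 1)
    · obtain ⟨x, hx, hwx⟩ := hbig
      exact ⟨{x}, singleton_subset_iff.2 hx, by simpa using hwx⟩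
    push Not at hbig
    have hS' : ∀ x ∈ S, w x ∣ 2 ^ d := fun x hx ↦
      dvd_two_pow_of_dvd_two_pow_succ_of_ne (hS x hx) (hbig x hx)
    rw [pow_succ] at hd ⊢
    obtain ⟨T₁, hT₁S, hT₁⟩ := ih hS' (by omega)
    have hrest := sum_sdiff hT₁S (f := w)
    obtain ⟨T₂, hT₂, hT₂sum⟩ := ih (S := S \ T₁) (fun x hx ↦ hS' x (mem_sdiff.1 hx).1) (by omega)
    refine ⟨T₁ ∪ T₂, union_subset hT₁S (hT₂.trans sdiff_subset), ?_⟩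
    rw [sum_union (disjoint_of_subset_right hT₂ disjoint_sdiff), hT₁, hT₂sum]
    omega

theorem exists_subset_sum_eq_mul_two_pow {k : ℕ} {S : Finset ι} (hS : ∀ x ∈ S, w x ∣ 2 ^ d)
    (hk : k * 2 ^ d ≤ ∑ x ∈ S, w x) : ∃ T ⊆ S, ∑ x ∈ T, w x = k * 2 ^ d := by
  classical
  induction k generalizing S with
  | zero => exact ⟨∅, empty_subset S, by simp⟩
  | succ k ih =>
    rw [Nat.succ_mul] at hk ⊢
    obtain ⟨T₁, hT₁S, hT₁⟩ := exists_subset_sum_eq_two_pow_s18 hS (by omega)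
    have hrest := sum_sdiff hT₁S (f := w)
    obtain ⟨T₂, hT₂, hT₂sum⟩ := ih (S := S \ T₁) (fun x hx ↦ hS x (mem_sdiff.1 hx).1) (by omega)
    refine ⟨T₁ ∪ T₂, union_subset hT₁S (hT₂.trans sdiff_subset), ?_⟩
    rw [sum_union (disjoint_of_subset_right hT₂ disjoint_sdiff), hT₁, hT₂sum]
    omega

theorem exists_superset_sum_eq_two_pow_s18 {U S : Finset ι} (hUS : U ⊆ S)
    (hS : ∀ x ∈ S, w x ∣ 2 ^ d) (hSd : 2 ^ d ∣ ∑ x ∈ S, w x)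
    (hU : ∑ x ∈ U, w x ≤ 2 ^ d) (hd : 2 ^ d ≤ ∑ x ∈ S, w x) :
    ∃ A, U ⊆ A ∧ A ⊆ S ∧ ∑ x ∈ A, w x = 2 ^ d := by
  classical
  obtain ⟨k, hk⟩ := hSd
  obtain ⟨j, rfl⟩ : ∃ j, k = j + 1 :=
    Nat.exists_eq_succ_of_ne_zero (by rintro rfl; rw [hk] at hd; simp at hd)
  rw [mul_comm, Nat.succ_mul] at hk
  have hSU := sum_sdiff hUS (f := w)
  obtain ⟨T, hT, hTsum⟩ := exists_subset_sum_eq_mul_two_pow (k := j) (S := S \ U)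
    (fun x hx ↦ hS x (mem_sdiff.1 hx).1) (by omega)
  refine ⟨S \ T, fun x hx ↦ mem_sdiff.2 ⟨hUS hx, fun hxT ↦ (mem_sdiff.1 (hT hxT)).2 hx⟩,
    sdiff_subset, ?_⟩
  have hST := sum_sdiff (hT.trans sdiff_subset) (f := w)
  omega

end PowersOfTwo

noncomputable def kraftSum (l : ι → ℕ) (T : Finset ι) : ℝ := ∑ x ∈ T, (1 / 2 : ℝ) ^ l x

section Kraft

variable {l : ι → ℕ} {L c : ℕ} {T : Finset ι}

lemma two_pow_mul_half_pow (hc : c ≤ L) : (2 : ℝ) ^ L * (1 / 2) ^ c = 2 ^ (L - c) := by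
  obtain ⟨k, rfl⟩ := Nat.exists_eq_add_of_le hc
  rw [Nat.add_sub_cancel_left, pow_add, mul_right_comm, ← mul_pow]
  norm_num

lemma natCast_sum_two_pow_sub (hL : ∀ x ∈ T, l x ≤ L) :
    ((∑ x ∈ T, 2 ^ (L - l x) : ℕ) : ℝ) = 2 ^ L * kraftSum l T := by
  rw [kraftSum, mul_sum]
  push_cast
  exact sum_congr rfl fun x hx ↦ (two_pow_mul_half_pow (hL x hx)).symm

lemma kraftSum_eq_half_pow_iff (hL : ∀ x ∈ T, l x ≤ L) (hc : c ≤ L) :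
    kraftSum l T = (1 / 2) ^ c ↔ ∑ x ∈ T, 2 ^ (L - l x) = 2 ^ (L - c) := by
  rw [← Nat.cast_inj (R := ℝ), natCast_sum_two_pow_sub hL, Nat.cast_pow, Nat.cast_ofNat,
    ← two_pow_mul_half_pow hc, mul_right_inj' (by positivity)]

lemma kraftSum_lt_half_pow_iff (hL : ∀ x ∈ T, l x ≤ L) (hc : c ≤ L) :
    kraftSum l T < (1 / 2) ^ c ↔ ∑ x ∈ T, 2 ^ (L - l x) < 2 ^ (L - c) := by
  rw [← Nat.cast_lt (α := ℝ), natCast_sum_two_pow_sub hL, Nat.cast_pow, Nat.cast_ofNat,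
    ← two_pow_mul_half_pow hc, mul_lt_mul_iff_right₀ (by positivity)]

lemma half_pow_le_kraftSum_iff (hL : ∀ x ∈ T, l x ≤ L) (hc : c ≤ L) :
    (1 / 2) ^ c ≤ kraftSum l T ↔ 2 ^ (L - c) ≤ ∑ x ∈ T, 2 ^ (L - l x) := by
  rw [← Nat.cast_le (α := ℝ), natCast_sum_two_pow_sub hL, Nat.cast_pow, Nat.cast_ofNat,
    ← two_pow_mul_half_pow hc, mul_le_mul_iff_right₀ (by positivity)]

lemma lt_of_mem_of_kraftSum_lt {i : ℕ} {x : ι} (hx : x ∈ T) (hT : kraftSum l T < (1 / 2) ^ i) :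
    i < l x := by
  have hx : (1 / 2 : ℝ) ^ l x < (1 / 2) ^ i :=
    (single_le_sum (fun _ _ ↦ by positivity) hx).trans_lt hT
  exact (pow_lt_pow_iff_right_of_lt_one₀ (by norm_num) (by norm_num)).1 hx

theorem exists_subset_kraftSum_eq_half_pow {S : Finset ι} {d : ℕ} (hS : ∀ x ∈ S, d ≤ l x)
    (hd : (1 / 2) ^ d ≤ kraftSum l S) : ∃ T ⊆ S, kraftSum l T = (1 / 2) ^ d := by
  set L := d + S.sup l
  have hL : ∀ x ∈ S, l x ≤ L := fun x hx ↦ (le_sup hx).trans (Nat.le_add_left _ _)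
  rw [half_pow_le_kraftSum_iff hL (Nat.le_add_right _ _)] at hd
  obtain ⟨T, hTS, hT⟩ := exists_subset_sum_eq_two_pow_s18
    (fun x hx ↦ pow_dvd_pow 2 (Nat.sub_le_sub_left (hS x hx) L)) hd
  exact ⟨T, hTS, (kraftSum_eq_half_pow_iff (fun x hx ↦ hL x (hTS hx)) (Nat.le_add_right _ _)).2 hT⟩

theorem exists_subset_kraftSum_eq_half_pow_of_le {V : Finset ι} {i : ℕ}
    (hV : (1 / 2) ^ i ≤ kraftSum l V) : ∃ V' ⊆ V, ∃ b ≤ i, kraftSum l V' = (1 / 2) ^ b := by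
  by_cases h : ∃ x ∈ V, l x ≤ i
  · obtain ⟨x, hx, hxi⟩ := h
    exact ⟨{x}, singleton_subset_iff.2 hx, l x, hxi, by simp [kraftSum]⟩
  · push Not at h
    obtain ⟨T, hTV, hT⟩ := exists_subset_kraftSum_eq_half_pow (fun x hx ↦ (h x hx).le) hV
    exact ⟨T, hTV, i, le_rfl, hT⟩

theorem exists_sdiff_kraftSum_eq_half_pow_succ [DecidableEq ι] {A : Finset ι} {i : ℕ}
    (hA : ∀ x ∈ A, i < l x) (hKA : kraftSum l A = (1 / 2) ^ i) :
    ∃ A₁ ⊆ A, kraftSum l A₁ = (1 / 2) ^ (i + 1) ∧ kraftSum l (A \ A₁) = (1 / 2) ^ (i + 1) := by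
  have hhalf : (1 / 2 : ℝ) ^ i = 2 * (1 / 2) ^ (i + 1) := by ring
  obtain ⟨A₁, hA₁A, hA₁⟩ := exists_subset_kraftSum_eq_half_pow (d := i + 1) hA
    (by rw [hKA, hhalf]; linarith [pow_pos (one_half_pos (α := ℝ)) (i + 1)])
  refine ⟨A₁, hA₁A, hA₁, ?_⟩
  have hsplit : kraftSum l (A \ A₁) + kraftSum l A₁ = kraftSum l A := sum_sdiff hA₁A
  linarith

theorem exists_superset_kraftSum_eq_half_pow [Fintype ι] (hl : kraftSum l univ = 1)
    {U : Finset ι} {i : ℕ} (hU₀ : U.Nonempty) (hU : kraftSum l U < (1 / 2) ^ i) :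
    ∃ A, U ⊆ A ∧ (∀ x ∈ A, i < l x) ∧ kraftSum l A = (1 / 2) ^ i := by
  classical
  set L := i + univ.sup l
  have hL : ∀ x, l x ≤ L := fun x ↦ (le_sup (mem_univ x)).trans (Nat.le_add_left _ _)
  set S := univ.filter fun x ↦ i < l x
  have hUS : U ⊆ S := fun x hx ↦ mem_filter.2 ⟨mem_univ x, lt_of_mem_of_kraftSum_lt hx hU⟩
  have hdvd : ∀ x ∈ S, 2 ^ (L - l x) ∣ 2 ^ (L - i) := fun x hx ↦
    pow_dvd_pow 2 (Nat.sub_le_sub_left (mem_filter.1 hx).2.le L)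
  have hSd : 2 ^ (L - i) ∣ ∑ x ∈ S, 2 ^ (L - l x) := by
    have htotal : ∑ x, 2 ^ (L - l x) = 2 ^ (L - 0) :=
      (kraftSum_eq_half_pow_iff (fun x _ ↦ hL x) (Nat.zero_le L)).1 (by rw [hl, pow_zero])
    have hcoarse : 2 ^ (L - i) ∣ ∑ x ∈ univ.filter (fun x ↦ ¬i < l x), 2 ^ (L - l x) :=
      dvd_sum fun x hx ↦ pow_dvd_pow 2 (by have := (mem_filter.1 hx).2; omega)
    rw [← Nat.dvd_add_left hcoarse, sum_filter_add_sum_filter_not, htotal]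
    exact pow_dvd_pow 2 (by omega)
  have hUd := (kraftSum_lt_half_pow_iff (fun x _ ↦ hL x) (Nat.le_add_right _ _)).1 hU
  have hSpos : 0 < ∑ x ∈ S, 2 ^ (L - l x) :=
    (sum_pos (fun _ _ ↦ by positivity) hU₀).trans_le (sum_le_sum_of_subset hUS)
  obtain ⟨A, hUA, hAS, hA⟩ :=
    exists_superset_sum_eq_two_pow_s18 hUS hdvd hSd hUd.le (Nat.le_of_dvd hSpos hSd)
  exact ⟨A, hUA, fun x hx ↦ (mem_filter.1 (hAS hx)).2,
    (kraftSum_eq_half_pow_iff (fun x _ ↦ hL x) (Nat.le_add_right _ _)).2 hA⟩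

end Kraft

theorem prob_lt_two_mul_general (n : ℕ) (p : Fin n → ℝ) (lH : Fin n → ℕ)
    (hpos : ∀ i, 0 < p i)
    (hcomplete : ∑ i, ((1:ℝ)/2) ^ (lH i) = 1)
    (hsm : ∀ (X Y : Finset (Fin n)) (a b : ℕ),
      (∑ x ∈ X, ((1:ℝ)/2) ^ (lH x)) = ((1:ℝ)/2) ^ a →
      (∑ x ∈ Y, ((1:ℝ)/2) ^ (lH x)) = ((1:ℝ)/2) ^ b →
      a < b → ∑ x ∈ Y, p x ≤ ∑ x ∈ X, p x)
    (U V : Finset (Fin n)) (i : ℕ)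
    (hU : ∑ x ∈ U, ((1:ℝ)/2) ^ (lH x) < ((1:ℝ)/2) ^ i)
    (hV : ((1:ℝ)/2) ^ i ≤ ∑ x ∈ V, ((1:ℝ)/2) ^ (lH x)) :
    ∑ x ∈ U, p x < 2 * ∑ x ∈ V, p x := by
  have hPV : 0 < ∑ x ∈ V, p x := sum_pos (fun x _ ↦ hpos x)
    (nonempty_of_sum_ne_zero ((pow_pos one_half_pos i).trans_le hV).ne')
  rcases U.eq_empty_or_nonempty with rfl | hU₀
  · simpa using hPV
  obtain ⟨V', hV'V, b, hbi, hKV'⟩ := exists_subset_kraftSum_eq_half_pow_of_le hV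
  obtain ⟨A, hUA, hAi, hKA⟩ := exists_superset_kraftSum_eq_half_pow hcomplete hU₀ hU
  obtain ⟨A₁, hA₁A, hKA₁, hKA₂⟩ := exists_sdiff_kraftSum_eq_half_pow_succ hAi hKA
  have hPA₁ := hsm V' A₁ b (i + 1) hKV' hKA₁ (by omega)
  have hPA₂ := hsm V' (A \ A₁) b (i + 1) hKV' hKA₂ (by omega)
  obtain ⟨y, hyA, hyU⟩ := exists_of_ssubset (hUA.ssubset_of_ne (by rintro rfl; exact hU.ne hKA))
  have hPUA : ∑ x ∈ U, p x < ∑ x ∈ A, p x :=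
    sum_lt_sum_of_subset hUA hyA hyU (hpos y) fun x _ _ ↦ (hpos x).le
  have hPV'V : ∑ x ∈ V', p x ≤ ∑ x ∈ V, p x :=
    sum_le_sum_of_subset_of_nonneg hV'V fun x _ _ ↦ (hpos x).le
  have hPA := sum_sdiff hA₁A (f := p)
  linarith

/-- For a Huffman code (complete, strongly monotone), if U and V are disjoint
subsets of the alphabet with Huffman-Kraft sums K(U) < 2^{−i} ≤ K(V), then
P(U) < 2·P(V). -/
theorem prob_lt_two_mul (n : ℕ) (p : Fin n → ℝ) (lH : Fin n → ℕ)
    (hpos : ∀ i, 0 < p i) (hsum : ∑ i, p i = 1)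
    (hcomplete : ∑ i, ((1:ℝ)/2) ^ (lH i) = 1)
    (hsm : ∀ (X Y : Finset (Fin n)) (a b : ℕ),
      (∑ x ∈ X, ((1:ℝ)/2) ^ (lH x)) = ((1:ℝ)/2) ^ a →
      (∑ x ∈ Y, ((1:ℝ)/2) ^ (lH x)) = ((1:ℝ)/2) ^ b →
      a < b → ∑ x ∈ Y, p x ≤ ∑ x ∈ X, p x)
    (U V : Finset (Fin n)) (hdisj : Disjoint U V) (i : ℕ)
    (hU : ∑ x ∈ U, ((1:ℝ)/2) ^ (lH x) < ((1:ℝ)/2) ^ i)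
    (hV : ((1:ℝ)/2) ^ i ≤ ∑ x ∈ V, ((1:ℝ)/2) ^ (lH x)) :
    ∑ x ∈ U, p x < 2 * ∑ x ∈ V, p x :=
  prob_lt_two_mul_general n p lH hpos hcomplete hsm U V i hU hV
end
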